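/- arXiv:2102.01555 — 7 statements merged into one kernel-verified Lean document; each statement's English description precedes it below -/
import Mathlib

section
/- Let τ be a timelike doubly torqued vector field. Then (∇_i α_j − ∇_j α_i) τ² = τ_i(∇_j κ − κ α_j − κ β_j) − τ_j(∇_i κ − κ α_i − κ β_i). Consequently, α is a closed one-form if and only if the one-form ∇_j κ − κ α_j − κ β_j is pointwise proportional to τ_j. -/
open scoped BigOperators
open Finset

noncomputable section

/-- Pointwise data of a pseudo-Riemannian manifold of dimension `n` in local index
notation: metric `g`, inverse metric `ginv`, Levi-Civita covariant derivative acting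
on scalars (`Ds`), one-forms (`Dv`) and (0,2)-tensors (`Dt`), and the Riemann tensor
`Riem` (all lower indices, `Riem x j k l m = R_{jklm}`), together with the standard
properties of the Levi-Civita connection and its curvature. -/
structure PseudoRiemannData (M : Type*) (n : ℕ) where
  g : M → Fin n → Fin n → ℝ
  ginv : M → Fin n → Fin n → ℝ
  g_symm : ∀ x i j, g x i j = g x j i
  ginv_symm : ∀ x i j, ginv x i j = ginv x j i
  g_ginv : ∀ x i j, (∑ k, g x i k * ginv x k j) = (if i = j then (1:ℝ) else 0)
  /-- covariant derivative (gradient) of a scalar -/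
  Ds : (M → ℝ) → M → Fin n → ℝ
  /-- covariant derivative of a one-form: `Dv σ x j k = ∇_j σ_k` -/
  Dv : (M → Fin n → ℝ) → M → Fin n → Fin n → ℝ
  /-- covariant derivative of a (0,2)-tensor: `Dt S x i j k = ∇_i S_{jk}` -/
  Dt : (M → Fin n → Fin n → ℝ) → M → Fin n → Fin n → Fin n → ℝ
  /-- Riemann curvature tensor, all indices down -/
  Riem : M → Fin n → Fin n → Fin n → Fin n → ℝ
  Ds_add : ∀ f h : M → ℝ, Ds (fun x => f x + h x) = fun x i => Ds f x i + Ds h x i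
  Ds_mul : ∀ f h : M → ℝ, Ds (fun x => f x * h x) = fun x i => f x * Ds h x i + h x * Ds f x i
  Dv_add : ∀ σ ρ : M → Fin n → ℝ,
    Dv (fun x k => σ x k + ρ x k) = fun x j k => Dv σ x j k + Dv ρ x j k
  Dv_smul : ∀ (f : M → ℝ) (σ : M → Fin n → ℝ),
    Dv (fun x k => f x * σ x k) = fun x j k => Ds f x j * σ x k + f x * Dv σ x j k
  /-- torsion-freeness: second covariant derivatives of scalars are symmetric -/
  hessian_symm : ∀ (f : M → ℝ) (x : M) (i j : Fin n), Dv (Ds f) x i j = Dv (Ds f) x j i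
  Dt_add : ∀ S T : M → Fin n → Fin n → ℝ,
    Dt (fun x j k => S x j k + T x j k) = fun x i j k => Dt S x i j k + Dt T x i j k
  Dt_tensor : ∀ σ ρ : M → Fin n → ℝ,
    Dt (fun x j k => σ x j * ρ x k) = fun x i j k => Dv σ x i j * ρ x k + σ x j * Dv ρ x i k
  /-- metric compatibility: `∇ (κ g) = (∇κ) g` -/
  Dt_scalar_g : ∀ κ : M → ℝ,
    Dt (fun x j k => κ x * g x j k) = fun x i j k => Ds κ x i * g x j k
  riem_antisym1 : ∀ x j k l m, Riem x j k l m = - Riem x k j l m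
  riem_antisym2 : ∀ x j k l m, Riem x j k l m = - Riem x j k m l
  riem_pairsymm : ∀ x j k l m, Riem x j k l m = Riem x l m j k
  /-- first Bianchi identity -/
  bianchi1 : ∀ x j k l m, Riem x j k l m + Riem x k l j m + Riem x l j k m = 0
  /-- Ricci identity: `(∇_j ∇_k − ∇_k ∇_j) σ_l = R_{jkl}{}^m σ_m = R_{jklm} σ^m` -/
  ricci_identity : ∀ (σ : M → Fin n → ℝ) (x : M) (j k l : Fin n),
    Dt (Dv σ) x j k l - Dt (Dv σ) x k j l
      = ∑ m, Riem x j k l m * (∑ p, ginv x m p * σ x p)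

namespace PseudoRiemannData

variable {M : Type*} {n : ℕ} (P : PseudoRiemannData M n)

/-- raising an index: `τ^i = g^{ij} τ_j` -/
def up (τ : M → Fin n → ℝ) (x : M) (i : Fin n) : ℝ := ∑ j, P.ginv x i j * τ x j

/-- scalar product of two one-forms: `σ_i τ^i` -/
def inner2 (σ τ : M → Fin n → ℝ) (x : M) : ℝ := ∑ i, σ x i * P.up τ x i

/-- Ricci tensor `R_{km} = g^{jl} R_{jklm}` -/
def Ric (x : M) (k m : Fin n) : ℝ := ∑ j, ∑ l, P.ginv x j l * P.Riem x j k l m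

/-- scalar curvature -/
def Scal (x : M) : ℝ := ∑ k, ∑ m, P.ginv x k m * P.Ric x k m

/-- `τ` is doubly torqued with data `(κ, α, β)`:
`∇_j τ_k = κ g_{jk} + α_j τ_k + τ_j β_k` with `α_k τ^k = 0` and `β_k τ^k = 0`. -/
def DoublyTorqued (τ : M → Fin n → ℝ) (κ : M → ℝ) (α β : M → Fin n → ℝ) : Prop :=
  (∀ x j k, P.Dv τ x j k = κ x * P.g x j k + α x j * τ x k + τ x j * β x k)
  ∧ (∀ x, P.inner2 α τ x = 0) ∧ (∀ x, P.inner2 β τ x = 0)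

/-- Weyl conformal curvature tensor. -/
def Weyl (x : M) (j k l m : Fin n) : ℝ :=
  P.Riem x j k l m
  + (P.g x j m * P.Ric x k l - P.g x k m * P.Ric x j l
      + P.g x k l * P.Ric x j m - P.g x j l * P.Ric x k m) / ((n : ℝ) - 2)
  + P.Scal x * (P.g x j l * P.g x k m - P.g x j m * P.g x k l)
      / (((n : ℝ) - 1) * ((n : ℝ) - 2))

end PseudoRiemannData

variable {M : Type*} {n : ℕ}

namespace PseudoRiemannData

variable {M : Type*} {n : ℕ} (P : PseudoRiemannData M n)

lemma Ds_zero : P.Ds (fun _ => (0:ℝ)) = fun _ _ => 0 := by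
  have h := P.Ds_add (fun _ => (0:ℝ)) (fun _ => (0:ℝ))
  simp only [add_zero] at h
  funext x i
  have h2 := congrFun (congrFun h x) i
  linarith

lemma Ds_one : P.Ds (fun _ => (1:ℝ)) = fun _ _ => 0 := by
  have h := P.Ds_mul (fun _ => (1:ℝ)) (fun _ => (1:ℝ))
  simp only [one_mul, mul_one] at h
  funext x i
  have h2 := congrFun (congrFun h x) i
  linarith

lemma Dv_zero : P.Dv (fun _ _ => (0:ℝ)) = fun _ _ _ => 0 := by
  have h := P.Dv_add (fun _ _ => (0:ℝ)) (fun _ _ => (0:ℝ))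
  simp only [add_zero] at h
  funext x i j
  have h2 := congrFun (congrFun (congrFun h x) i) j
  linarith

lemma Dt_zero : P.Dt (fun _ _ _ => (0:ℝ)) = fun _ _ _ _ => 0 := by
  have h := P.Dt_add (fun _ _ _ => (0:ℝ)) (fun _ _ _ => (0:ℝ))
  simp only [add_zero] at h
  funext x i j k
  have h2 := congrFun (congrFun (congrFun (congrFun h x) i) j) k
  linarith

lemma Ds_sum {ι : Type*} [DecidableEq ι] (s : Finset ι) (f : ι → M → ℝ) :
    P.Ds (fun x => ∑ k ∈ s, f k x) = fun x i => ∑ k ∈ s, P.Ds (f k) x i := by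
  induction s using Finset.induction with
  | empty => simpa using P.Ds_zero
  | @insert a s ha ih =>
      have h1 : (fun x => ∑ k ∈ insert a s, f k x)
          = fun x => f a x + ∑ k ∈ s, f k x := by
        funext x; rw [Finset.sum_insert ha]
      rw [h1, P.Ds_add (f a) (fun x => ∑ k ∈ s, f k x), ih]
      funext x i
      rw [Finset.sum_insert ha]

lemma Dv_sum {ι : Type*} [DecidableEq ι] (s : Finset ι) (f : ι → M → Fin n → ℝ) :
    P.Dv (fun x k => ∑ m ∈ s, f m x k) = fun x i j => ∑ m ∈ s, P.Dv (f m) x i j := by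
  induction s using Finset.induction with
  | empty => simpa using P.Dv_zero
  | @insert a s ha ih =>
      have h1 : (fun x k => ∑ m ∈ insert a s, f m x k)
          = fun x k => f a x k + ∑ m ∈ s, f m x k := by
        funext x k; rw [Finset.sum_insert ha]
      rw [h1, P.Dv_add (f a) (fun x k => ∑ m ∈ s, f m x k), ih]
      funext x i j
      rw [Finset.sum_insert ha]

lemma Dt_sum {ι : Type*} [DecidableEq ι] (s : Finset ι) (f : ι → M → Fin n → Fin n → ℝ) :
    P.Dt (fun x j k => ∑ m ∈ s, f m x j k)
      = fun x i j k => ∑ m ∈ s, P.Dt (f m) x i j k := by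
  induction s using Finset.induction with
  | empty => simpa using P.Dt_zero
  | @insert a s ha ih =>
      have h1 : (fun x j k => ∑ m ∈ insert a s, f m x j k)
          = fun x j k => f a x j k + ∑ m ∈ s, f m x j k := by
        funext x j k; rw [Finset.sum_insert ha]
      rw [h1, P.Dt_add (f a) (fun x j k => ∑ m ∈ s, f m x j k), ih]
      funext x i j k
      rw [Finset.sum_insert ha]

end PseudoRiemannData
namespace PseudoRiemannData

variable {M : Type*} {n : ℕ} (P : PseudoRiemannData M n)

/-- "Christoffel" data: `Gam m x i j = Γ^m_{ij}` -/
def Gam (m : Fin n) : M → Fin n → Fin n → ℝ :=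
  P.Dv (fun _ k => if k = m then (1:ℝ) else 0)

lemma Dv_repr (σ : M → Fin n → ℝ) (x : M) (i j : Fin n) :
    P.Dv σ x i j = P.Ds (fun y => σ y j) x i + ∑ m, σ x m * P.Gam m x i j := by
  have hdec : σ = fun y k => ∑ m, σ y m * (if k = m then (1:ℝ) else 0) := by
    funext y k; simp
  calc P.Dv σ x i j
      = P.Dv (fun y k => ∑ m, σ y m * (if k = m then (1:ℝ) else 0)) x i j := by
        rw [← hdec]
    _ = ∑ m, P.Dv (fun y k => σ y m * (if k = m then (1:ℝ) else 0)) x i j := by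
        rw [P.Dv_sum Finset.univ (fun m y k => σ y m * (if k = m then (1:ℝ) else 0))]
    _ = ∑ m, (P.Ds (fun y => σ y m) x i * (if j = m then (1:ℝ) else 0)
          + σ x m * P.Gam m x i j) := by
        refine Finset.sum_congr rfl fun m _ => ?_
        have h2 := congrFun (congrFun (congrFun
          (P.Dv_smul (fun y => σ y m) (fun _ k => if k = m then (1:ℝ) else 0)) x) i) j
        simpa [Gam] using h2
    _ = P.Ds (fun y => σ y j) x i + ∑ m, σ x m * P.Gam m x i j := by
        rw [Finset.sum_add_distrib]
        simp

lemma Dt_repr (S : M → Fin n → Fin n → ℝ) (x : M) (i j k : Fin n) :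
    P.Dt S x i j k = P.Dv (fun y j' => S y j' k) x i j + ∑ p, S x j p * P.Gam p x i k := by
  have hdec : S = fun y j' k' => ∑ p, S y j' p * (if k' = p then (1:ℝ) else 0) := by
    funext y j' k'; simp
  calc P.Dt S x i j k
      = P.Dt (fun y j' k' => ∑ p, S y j' p * (if k' = p then (1:ℝ) else 0)) x i j k := by
        rw [← hdec]
    _ = ∑ p, P.Dt (fun y j' k' => S y j' p * (if k' = p then (1:ℝ) else 0)) x i j k := by
        rw [P.Dt_sum Finset.univ (fun p y j' k' => S y j' p * (if k' = p then (1:ℝ) else 0))]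
    _ = ∑ p, (P.Dv (fun y j' => S y j' p) x i j * (if k = p then (1:ℝ) else 0)
          + S x j p * P.Gam p x i k) := by
        refine Finset.sum_congr rfl fun p _ => ?_
        have h2 := congrFun (congrFun (congrFun (congrFun
          (P.Dt_tensor (fun y j' => S y j' p) (fun _ k' => if k' = p then (1:ℝ) else 0)) x) i) j) k
        simpa [Gam] using h2
    _ = P.Dv (fun y j' => S y j' k) x i j + ∑ p, S x j p * P.Gam p x i k := by
        rw [Finset.sum_add_distrib]
        simp

lemma ginv_g (x : M) (c k : Fin n) :
    ∑ a, P.ginv x c a * P.g x a k = if k = c then (1:ℝ) else 0 := by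
  calc ∑ a, P.ginv x c a * P.g x a k = ∑ a, P.g x k a * P.ginv x a c := by
        refine Finset.sum_congr rfl fun a _ => ?_
        rw [P.g_symm x k a, P.ginv_symm x a c]; ring
    _ = if k = c then (1:ℝ) else 0 := P.g_ginv x k c

lemma g_up (σ : M → Fin n → ℝ) (x : M) (j : Fin n) :
    ∑ k, P.up σ x k * P.g x j k = σ x j := by
  have h1 : ∀ k, P.up σ x k * P.g x j k = ∑ p, P.g x j k * P.ginv x k p * σ x p := by
    intro k
    rw [up, Finset.sum_mul]
    refine Finset.sum_congr rfl fun p _ => ?_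
    ring
  calc ∑ k, P.up σ x k * P.g x j k
      = ∑ k, ∑ p, P.g x j k * P.ginv x k p * σ x p := Finset.sum_congr rfl fun k _ => h1 k
    _ = ∑ p, ∑ k, P.g x j k * P.ginv x k p * σ x p := Finset.sum_comm
    _ = ∑ p, (∑ k, P.g x j k * P.ginv x k p) * σ x p := by
        refine Finset.sum_congr rfl fun p _ => ?_
        rw [Finset.sum_mul]
    _ = ∑ p, (if j = p then (1:ℝ) else 0) * σ x p := by
        refine Finset.sum_congr rfl fun p _ => ?_
        rw [P.g_ginv x j p]
    _ = σ x j := by simp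

lemma inner2_symm (σ ρ : M → Fin n → ℝ) (x : M) :
    P.inner2 σ ρ x = P.inner2 ρ σ x := by
  simp only [inner2, up, Finset.mul_sum]
  rw [Finset.sum_comm]
  refine Finset.sum_congr rfl fun a _ => Finset.sum_congr rfl fun b _ => ?_
  rw [P.ginv_symm x b a]; ring

lemma inner2_eq' (σ ρ : M → Fin n → ℝ) (x : M) :
    ∑ k, P.up ρ x k * σ x k = P.inner2 σ ρ x := by
  simp only [inner2]
  refine Finset.sum_congr rfl fun k _ => ?_
  ring

end PseudoRiemannData
namespace PseudoRiemannData

variable {M : Type*} {n : ℕ} (P : PseudoRiemannData M n)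

lemma Dt_g_zero : P.Dt P.g = fun _ _ _ _ => 0 := by
  have h := P.Dt_scalar_g (fun _ => (1:ℝ))
  simp only [one_mul, P.Ds_one, zero_mul] at h
  exact h

lemma Ds_g (x : M) (i j k : Fin n) :
    P.Ds (fun y => P.g y j k) x i
      = - ∑ m, P.g x m k * P.Gam m x i j - ∑ m, P.g x j m * P.Gam m x i k := by
  have h0 : P.Dt P.g x i j k = 0 := by rw [P.Dt_g_zero]
  rw [P.Dt_repr P.g x i j k, P.Dv_repr (fun y j' => P.g y j' k) x i j] at h0
  have e : ∑ p, P.g x j p * P.Gam p x i k = ∑ m, P.g x j m * P.Gam m x i k := rfl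
  linarith [h0]

lemma Ds_ginv (x : M) (i c b : Fin n) :
    P.Ds (fun y => P.ginv y c b) x i
      = ∑ m, P.ginv x c m * P.Gam b x i m + ∑ m, P.ginv x m b * P.Gam c x i m := by
  have hGG : ∀ a, ∑ k, (P.g x a k * P.Ds (fun y => P.ginv y k b) x i
      + P.ginv x k b * P.Ds (fun y => P.g y a k) x i) = 0 := by
    intro a
    have e : (fun y => ∑ k, P.g y a k * P.ginv y k b)
        = (fun _ : M => (if a = b then (1:ℝ) else 0)) := by
      funext y; exact P.g_ginv y a b
    have hD : P.Ds (fun y => ∑ k, P.g y a k * P.ginv y k b) x i = 0 := by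
      rw [e]
      rcases eq_or_ne a b with hab | hab
      · simp only [if_pos hab, P.Ds_one]
      · simp only [if_neg hab, P.Ds_zero]
    have hS := congrFun (congrFun (P.Ds_sum Finset.univ
        (fun k => fun y => P.g y a k * P.ginv y k b)) x) i
    rw [hS] at hD
    rw [← hD]
    refine Finset.sum_congr rfl fun k _ => ?_
    have hm := congrFun (congrFun (P.Ds_mul (fun y => P.g y a k) (fun y => P.ginv y k b)) x) i
    rw [hm]
  have hGG2 : ∀ a, ∑ k, P.g x a k * P.Ds (fun y => P.ginv y k b) x i
      = ∑ k, P.ginv x k b * (∑ m, P.g x m k * P.Gam m x i a + ∑ m, P.g x a m * P.Gam m x i k) := by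
    intro a
    have h := hGG a
    rw [Finset.sum_add_distrib] at h
    have h2 : ∑ k, P.ginv x k b * P.Ds (fun y => P.g y a k) x i
        = - ∑ k, P.ginv x k b * (∑ m, P.g x m k * P.Gam m x i a + ∑ m, P.g x a m * P.Gam m x i k) := by
      rw [← Finset.sum_neg_distrib]
      refine Finset.sum_congr rfl fun k _ => ?_
      rw [P.Ds_g x i a k]
      ring
    linarith [h, h2]
  -- contract with ginv_{ca}
  have hL : ∑ a, P.ginv x c a * ∑ k, P.g x a k * P.Ds (fun y => P.ginv y k b) x i
      = P.Ds (fun y => P.ginv y c b) x i := by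
    calc ∑ a, P.ginv x c a * ∑ k, P.g x a k * P.Ds (fun y => P.ginv y k b) x i
        = ∑ a, ∑ k, P.ginv x c a * P.g x a k * P.Ds (fun y => P.ginv y k b) x i := by
          refine Finset.sum_congr rfl fun a _ => ?_
          rw [Finset.mul_sum]
          exact Finset.sum_congr rfl fun k _ => by ring
      _ = ∑ k, ∑ a, P.ginv x c a * P.g x a k * P.Ds (fun y => P.ginv y k b) x i :=
          Finset.sum_comm
      _ = ∑ k, (∑ a, P.ginv x c a * P.g x a k) * P.Ds (fun y => P.ginv y k b) x i := by
          refine Finset.sum_congr rfl fun k _ => ?_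
          rw [Finset.sum_mul]
      _ = ∑ k, (if k = c then (1:ℝ) else 0) * P.Ds (fun y => P.ginv y k b) x i := by
          refine Finset.sum_congr rfl fun k _ => ?_
          rw [P.ginv_g x c k]
      _ = P.Ds (fun y => P.ginv y c b) x i := by simp
  have hT1 : ∑ a, P.ginv x c a * ∑ k, P.ginv x k b * ∑ m, P.g x m k * P.Gam m x i a
      = ∑ m, P.ginv x c m * P.Gam b x i m := by
    have inner : ∀ a, ∑ k, P.ginv x k b * ∑ m, P.g x m k * P.Gam m x i a
        = P.Gam b x i a := by
      intro a
      calc ∑ k, P.ginv x k b * ∑ m, P.g x m k * P.Gam m x i a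
          = ∑ k, ∑ m, P.ginv x b k * P.g x k m * P.Gam m x i a := by
            refine Finset.sum_congr rfl fun k _ => ?_
            rw [Finset.mul_sum]
            refine Finset.sum_congr rfl fun m _ => ?_
            rw [P.ginv_symm x k b, P.g_symm x m k]
            ring
        _ = ∑ m, ∑ k, P.ginv x b k * P.g x k m * P.Gam m x i a := Finset.sum_comm
        _ = ∑ m, (∑ k, P.ginv x b k * P.g x k m) * P.Gam m x i a := by
            refine Finset.sum_congr rfl fun m _ => ?_
            rw [Finset.sum_mul]
        _ = ∑ m, (if m = b then (1:ℝ) else 0) * P.Gam m x i a := by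
            refine Finset.sum_congr rfl fun m _ => ?_
            rw [P.ginv_g x b m]
        _ = P.Gam b x i a := by simp
    refine Finset.sum_congr rfl fun a _ => ?_
    rw [inner a]
  have hT2 : ∑ a, P.ginv x c a * ∑ k, P.ginv x k b * ∑ m, P.g x a m * P.Gam m x i k
      = ∑ m, P.ginv x m b * P.Gam c x i m := by
    calc ∑ a, P.ginv x c a * ∑ k, P.ginv x k b * ∑ m, P.g x a m * P.Gam m x i k
        = ∑ a, ∑ k, ∑ m, P.ginv x k b * (P.ginv x c a * P.g x a m * P.Gam m x i k) := by
          refine Finset.sum_congr rfl fun a _ => ?_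
          rw [Finset.mul_sum]
          refine Finset.sum_congr rfl fun k _ => ?_
          rw [Finset.mul_sum, Finset.mul_sum]
          refine Finset.sum_congr rfl fun m _ => ?_
          ring
      _ = ∑ k, ∑ a, ∑ m, P.ginv x k b * (P.ginv x c a * P.g x a m * P.Gam m x i k) :=
          Finset.sum_comm
      _ = ∑ k, ∑ m, ∑ a, P.ginv x k b * (P.ginv x c a * P.g x a m * P.Gam m x i k) := by
          refine Finset.sum_congr rfl fun k _ => ?_
          exact Finset.sum_comm
      _ = ∑ k, ∑ m, P.ginv x k b * ((∑ a, P.ginv x c a * P.g x a m) * P.Gam m x i k) := by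
          refine Finset.sum_congr rfl fun k _ => Finset.sum_congr rfl fun m _ => ?_
          rw [Finset.sum_mul, Finset.mul_sum]
      _ = ∑ k, ∑ m, P.ginv x k b * ((if m = c then (1:ℝ) else 0) * P.Gam m x i k) := by
          refine Finset.sum_congr rfl fun k _ => Finset.sum_congr rfl fun m _ => ?_
          rw [P.ginv_g x c m]
      _ = ∑ k, P.ginv x k b * P.Gam c x i k := by
          refine Finset.sum_congr rfl fun k _ => ?_
          rw [← Finset.mul_sum]
          simp
      _ = ∑ m, P.ginv x m b * P.Gam c x i m := rfl
  have hR : ∑ a, P.ginv x c a * ∑ k, P.g x a k * P.Ds (fun y => P.ginv y k b) x i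
      = ∑ m, P.ginv x c m * P.Gam b x i m + ∑ m, P.ginv x m b * P.Gam c x i m := by
    calc ∑ a, P.ginv x c a * ∑ k, P.g x a k * P.Ds (fun y => P.ginv y k b) x i
        = ∑ a, P.ginv x c a * ∑ k, P.ginv x k b
            * (∑ m, P.g x m k * P.Gam m x i a + ∑ m, P.g x a m * P.Gam m x i k) := by
          refine Finset.sum_congr rfl fun a _ => ?_
          rw [hGG2 a]
      _ = ∑ a, (P.ginv x c a * ∑ k, P.ginv x k b * ∑ m, P.g x m k * P.Gam m x i a
            + P.ginv x c a * ∑ k, P.ginv x k b * ∑ m, P.g x a m * P.Gam m x i k) := by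
          refine Finset.sum_congr rfl fun a _ => ?_
          simp only [mul_add, Finset.sum_add_distrib, Finset.mul_sum]
      _ = ∑ m, P.ginv x c m * P.Gam b x i m + ∑ m, P.ginv x m b * P.Gam c x i m := by
          rw [Finset.sum_add_distrib, hT1, hT2]
  rw [← hL, hR]

end PseudoRiemannData
namespace PseudoRiemannData

variable {M : Type*} {n : ℕ} (P : PseudoRiemannData M n)

lemma Ds_inner2 (σ ρ : M → Fin n → ℝ) (x : M) (i : Fin n) :
    P.Ds (P.inner2 σ ρ) x i
      = ∑ k, P.up ρ x k * P.Dv σ x i k + ∑ k, P.up σ x k * P.Dv ρ x i k := by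
  have e : P.inner2 σ ρ = fun y => ∑ a, ∑ b, σ y a * (P.ginv y a b * ρ y b) := by
    funext y
    simp only [inner2, up, Finset.mul_sum]
  have hL : P.Ds (P.inner2 σ ρ) x i
      = ∑ a, ∑ b, (σ x a * (P.ginv x a b * P.Ds (fun y => ρ y b) x i
            + ρ x b * P.Ds (fun y => P.ginv y a b) x i)
          + P.ginv x a b * ρ x b * P.Ds (fun y => σ y a) x i) := by
    rw [e]
    have h1 := congrFun (congrFun (P.Ds_sum Finset.univ
        (fun a => fun y => ∑ b, σ y a * (P.ginv y a b * ρ y b))) x) i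
    rw [h1]
    refine Finset.sum_congr rfl fun a _ => ?_
    have h2 := congrFun (congrFun (P.Ds_sum Finset.univ
        (fun b => fun y => σ y a * (P.ginv y a b * ρ y b))) x) i
    rw [h2]
    refine Finset.sum_congr rfl fun b _ => ?_
    have h3 := congrFun (congrFun (P.Ds_mul (fun y => σ y a)
        (fun y => P.ginv y a b * ρ y b)) x) i
    rw [h3]
    have h4 := congrFun (congrFun (P.Ds_mul (fun y => P.ginv y a b) (fun y => ρ y b)) x) i
    rw [h4]
  have hL' : P.Ds (P.inner2 σ ρ) x i
      = (∑ a, ∑ b, σ x a * (P.ginv x a b * P.Ds (fun y => ρ y b) x i))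
        + (∑ a, ∑ b, σ x a * (ρ x b * P.Ds (fun y => P.ginv y a b) x i))
        + (∑ a, ∑ b, P.ginv x a b * ρ x b * P.Ds (fun y => σ y a) x i) := by
    rw [hL]
    simp only [mul_add, Finset.sum_add_distrib]
  have hR1 : ∑ k, P.up ρ x k * P.Dv σ x i k
      = ∑ k, P.up ρ x k * P.Ds (fun y => σ y k) x i
        + ∑ k, ∑ m, P.up ρ x k * (σ x m * P.Gam m x i k) := by
    rw [← Finset.sum_add_distrib]
    refine Finset.sum_congr rfl fun k _ => ?_
    rw [P.Dv_repr σ x i k, mul_add, Finset.mul_sum]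
  have hR2 : ∑ k, P.up σ x k * P.Dv ρ x i k
      = ∑ k, P.up σ x k * P.Ds (fun y => ρ y k) x i
        + ∑ k, ∑ m, P.up σ x k * (ρ x m * P.Gam m x i k) := by
    rw [← Finset.sum_add_distrib]
    refine Finset.sum_congr rfl fun k _ => ?_
    rw [P.Dv_repr ρ x i k, mul_add, Finset.mul_sum]
  have hA1 : ∑ a, ∑ b, P.ginv x a b * ρ x b * P.Ds (fun y => σ y a) x i
      = ∑ k, P.up ρ x k * P.Ds (fun y => σ y k) x i := by
    refine Finset.sum_congr rfl fun a _ => ?_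
    simp only [up, Finset.sum_mul]
  have hA2 : ∑ a, ∑ b, σ x a * (P.ginv x a b * P.Ds (fun y => ρ y b) x i)
      = ∑ k, P.up σ x k * P.Ds (fun y => ρ y k) x i := by
    rw [Finset.sum_comm]
    refine Finset.sum_congr rfl fun b _ => ?_
    simp only [up, Finset.sum_mul]
    refine Finset.sum_congr rfl fun a _ => ?_
    rw [P.ginv_symm x b a]
    ring
  have hp1 : (∑ a, ∑ b, ∑ m, σ x a * P.ginv x a m * (ρ x b * P.Gam b x i m))
      = ∑ k, ∑ m, P.up σ x k * (ρ x m * P.Gam m x i k) := by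
    calc ∑ a, ∑ b, ∑ m, σ x a * P.ginv x a m * (ρ x b * P.Gam b x i m)
        = ∑ a, ∑ m, ∑ b, σ x a * P.ginv x a m * (ρ x b * P.Gam b x i m) := by
          exact Finset.sum_congr rfl fun a _ => Finset.sum_comm
      _ = ∑ m, ∑ a, ∑ b, σ x a * P.ginv x a m * (ρ x b * P.Gam b x i m) := Finset.sum_comm
      _ = ∑ m, ∑ b, ∑ a, σ x a * P.ginv x a m * (ρ x b * P.Gam b x i m) := by
          exact Finset.sum_congr rfl fun m _ => Finset.sum_comm
      _ = ∑ m, ∑ b, P.up σ x m * (ρ x b * P.Gam b x i m) := by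
          refine Finset.sum_congr rfl fun m _ => Finset.sum_congr rfl fun b _ => ?_
          rw [← Finset.sum_mul]
          congr 1
          simp only [up]
          refine Finset.sum_congr rfl fun a _ => ?_
          rw [P.ginv_symm x m a]
          ring
  have hp2 : (∑ a, ∑ b, ∑ m, ρ x b * P.ginv x m b * (σ x a * P.Gam a x i m))
      = ∑ k, ∑ m, P.up ρ x k * (σ x m * P.Gam m x i k) := by
    calc ∑ a, ∑ b, ∑ m, ρ x b * P.ginv x m b * (σ x a * P.Gam a x i m)
        = ∑ a, ∑ m, ∑ b, ρ x b * P.ginv x m b * (σ x a * P.Gam a x i m) := by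
          exact Finset.sum_congr rfl fun a _ => Finset.sum_comm
      _ = ∑ m, ∑ a, ∑ b, ρ x b * P.ginv x m b * (σ x a * P.Gam a x i m) := Finset.sum_comm
      _ = ∑ m, ∑ a, P.up ρ x m * (σ x a * P.Gam a x i m) := by
          refine Finset.sum_congr rfl fun m _ => Finset.sum_congr rfl fun a _ => ?_
          rw [← Finset.sum_mul]
          congr 1
          simp only [up]
          refine Finset.sum_congr rfl fun b _ => ?_
          ring
  have hA3 : ∑ a, ∑ b, σ x a * (ρ x b * P.Ds (fun y => P.ginv y a b) x i)
      = ∑ k, ∑ m, P.up ρ x k * (σ x m * P.Gam m x i k)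
        + ∑ k, ∑ m, P.up σ x k * (ρ x m * P.Gam m x i k) := by
    calc ∑ a, ∑ b, σ x a * (ρ x b * P.Ds (fun y => P.ginv y a b) x i)
        = ∑ a, ∑ b, ((∑ m, σ x a * P.ginv x a m * (ρ x b * P.Gam b x i m))
            + ∑ m, ρ x b * P.ginv x m b * (σ x a * P.Gam a x i m)) := by
          refine Finset.sum_congr rfl fun a _ => Finset.sum_congr rfl fun b _ => ?_
          rw [P.Ds_ginv x i a b]
          simp only [mul_add, Finset.mul_sum]
          refine congrArg₂ (· + ·) ?_ ?_ <;>
            exact Finset.sum_congr rfl fun m _ => by ring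
      _ = (∑ a, ∑ b, ∑ m, σ x a * P.ginv x a m * (ρ x b * P.Gam b x i m))
          + (∑ a, ∑ b, ∑ m, ρ x b * P.ginv x m b * (σ x a * P.Gam a x i m)) := by
          simp only [Finset.sum_add_distrib]
      _ = ∑ k, ∑ m, P.up ρ x k * (σ x m * P.Gam m x i k)
          + ∑ k, ∑ m, P.up σ x k * (ρ x m * P.Gam m x i k) := by
          rw [hp1, hp2]
          ring
  rw [hL', hA1, hA2, hA3, hR1, hR2]
  ring

end PseudoRiemannData
/-- the identity `(∇_i α_j − ∇_j α_i) τ² = τ_i(∇_j κ − κα_j − κβ_j) − τ_j(…)`,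
and consequently `α` is closed iff `∇κ − κα − κβ` is pointwise proportional to `τ`. -/
theorem alpha_closed_iff (P : PseudoRiemannData M n)
    (τ : M → Fin n → ℝ) (κ : M → ℝ) (α β : M → Fin n → ℝ)
    (ht : ∀ x, P.inner2 τ τ x < 0)
    (h : P.DoublyTorqued τ κ α β) :
    (∀ (x : M) (i j : Fin n),
      (P.Dv α x i j - P.Dv α x j i) * P.inner2 τ τ x
        = τ x i * (P.Ds κ x j - κ x * α x j - κ x * β x j)
          - τ x j * (P.Ds κ x i - κ x * α x i - κ x * β x i))
    ∧ ((∀ (x : M) (i j : Fin n), P.Dv α x i j = P.Dv α x j i)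
        ↔ ∀ x : M, ∃ c : ℝ, ∀ j : Fin n,
            P.Ds κ x j - κ x * α x j - κ x * β x j = c * τ x j) := by
  obtain ⟨hτ, hα, hβ⟩ := h
  have e1 : P.Dv τ = fun y j k => κ y * P.g y j k + (α y j * τ y k + τ y j * β y k) := by
    funext y j k
    rw [hτ y j k]
    ring
  have e2 : ∀ y i1 j1 k1, P.Dt (P.Dv τ) y i1 j1 k1
      = P.Ds κ y i1 * P.g y j1 k1 + (P.Dv α y i1 j1 * τ y k1 + α y j1 * P.Dv τ y i1 k1
        + (P.Dv τ y i1 j1 * β y k1 + τ y j1 * P.Dv β y i1 k1)) := by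
    intro y i1 j1 k1
    conv_lhs => rw [e1]
    have t1 := congrFun (congrFun (congrFun (congrFun (P.Dt_add
        (fun y j k => κ y * P.g y j k)
        (fun y j k => α y j * τ y k + τ y j * β y k)) y) i1) j1) k1
    rw [t1]
    have t2 := congrFun (congrFun (congrFun (congrFun (P.Dt_add
        (fun y j k => α y j * τ y k)
        (fun y j k => τ y j * β y k)) y) i1) j1) k1
    rw [t2]
    have t3 := congrFun (congrFun (congrFun (congrFun (P.Dt_scalar_g κ) y) i1) j1) k1
    rw [t3]
    have t4 := congrFun (congrFun (congrFun (congrFun (P.Dt_tensor α τ) y) i1) j1) k1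
    rw [t4]
    have t5 := congrFun (congrFun (congrFun (congrFun (P.Dt_tensor τ β) y) i1) j1) k1
    rw [t5]
  have main : ∀ (x : M) (i j : Fin n),
      (P.Dv α x i j - P.Dv α x j i) * P.inner2 τ τ x
        = τ x i * (P.Ds κ x j - κ x * α x j - κ x * β x j)
          - τ x j * (P.Ds κ x i - κ x * α x i - κ x * β x i) := by
    intro x i j
    have S1 : ∀ j1, ∑ k, P.up τ x k * P.g x j1 k = τ x j1 := fun j1 => P.g_up τ x j1
    have S2 : ∑ k, P.up τ x k * τ x k = P.inner2 τ τ x := P.inner2_eq' τ τ x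
    have S4 : ∑ k, P.up τ x k * β x k = 0 := by
      rw [P.inner2_eq' β τ x]
      exact hβ x
    have S3 : ∀ i1, ∑ k, P.up τ x k * P.Dv τ x i1 k
        = κ x * τ x i1 + α x i1 * P.inner2 τ τ x := by
      intro i1
      calc ∑ k, P.up τ x k * P.Dv τ x i1 k
          = ∑ k, (κ x * (P.up τ x k * P.g x i1 k) + α x i1 * (P.up τ x k * τ x k)
              + τ x i1 * (P.up τ x k * β x k)) := by
            refine Finset.sum_congr rfl fun k _ => ?_
            rw [hτ x i1 k]
            ring
        _ = κ x * (∑ k, P.up τ x k * P.g x i1 k) + α x i1 * (∑ k, P.up τ x k * τ x k)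
            + τ x i1 * (∑ k, P.up τ x k * β x k) := by
            simp only [Finset.sum_add_distrib, ← Finset.mul_sum]
        _ = κ x * τ x i1 + α x i1 * P.inner2 τ τ x := by
            rw [S1 i1, S2, S4]
            ring
    have S3b : ∀ i1, ∑ k, P.up β x k * P.Dv τ x i1 k
        = κ x * β x i1 + τ x i1 * P.inner2 β β x := by
      intro i1
      have hβτ : ∑ k, P.up β x k * τ x k = 0 := by
        rw [P.inner2_eq' τ β x, P.inner2_symm τ β x]
        exact hβ x
      have hββ : ∑ k, P.up β x k * β x k = P.inner2 β β x := P.inner2_eq' β β x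
      calc ∑ k, P.up β x k * P.Dv τ x i1 k
          = ∑ k, (κ x * (P.up β x k * P.g x i1 k) + α x i1 * (P.up β x k * τ x k)
              + τ x i1 * (P.up β x k * β x k)) := by
            refine Finset.sum_congr rfl fun k _ => ?_
            rw [hτ x i1 k]
            ring
        _ = κ x * (∑ k, P.up β x k * P.g x i1 k) + α x i1 * (∑ k, P.up β x k * τ x k)
            + τ x i1 * (∑ k, P.up β x k * β x k) := by
            simp only [Finset.sum_add_distrib, ← Finset.mul_sum]
        _ = κ x * β x i1 + τ x i1 * P.inner2 β β x := by
            rw [P.g_up β x i1, hβτ, hββ]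
            ring
    have S5 : ∀ i1, ∑ k, P.up τ x k * P.Dv β x i1 k
        = -(κ x * β x i1) - P.inner2 β β x * τ x i1 := by
      intro i1
      have h0 : P.Ds (P.inner2 β τ) x i1 = 0 := by
        have hz : P.inner2 β τ = fun _ => (0:ℝ) := funext hβ
        rw [hz, P.Ds_zero]
      have h1 := P.Ds_inner2 β τ x i1
      rw [h0, S3b i1] at h1
      linarith [h1]
    have hZ : ∑ k, P.up τ x k * (∑ m, P.Riem x i j k m * P.up τ x m) = 0 := by
      have hA : ∑ k, P.up τ x k * (∑ m, P.Riem x i j k m * P.up τ x m)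
          = ∑ k, ∑ m, P.up τ x k * (P.Riem x i j k m * P.up τ x m) := by
        refine Finset.sum_congr rfl fun k _ => ?_
        rw [Finset.mul_sum]
      have hB : ∑ k, ∑ m, P.up τ x k * (P.Riem x i j k m * P.up τ x m)
          = - ∑ k, ∑ m, P.up τ x k * (P.Riem x i j k m * P.up τ x m) := by
        conv_lhs => rw [Finset.sum_comm]
        rw [← Finset.sum_neg_distrib]
        refine Finset.sum_congr rfl fun k _ => ?_
        rw [← Finset.sum_neg_distrib]
        refine Finset.sum_congr rfl fun m _ => ?_
        rw [P.riem_antisym2 x i j m k]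
        ring
      have : ∑ k, ∑ m, P.up τ x k * (P.Riem x i j k m * P.up τ x m) = 0 := by
        linarith [hB]
      rw [hA, this]
    have hRic : ∀ k, P.Dt (P.Dv τ) x i j k - P.Dt (P.Dv τ) x j i k
        = ∑ m, P.Riem x i j k m * P.up τ x m := by
      intro k
      exact P.ricci_identity τ x i j k
    have key : ∀ i1 j1, ∑ k, P.up τ x k * P.Dt (P.Dv τ) x i1 j1 k
        = P.Ds κ x i1 * τ x j1 + P.Dv α x i1 j1 * P.inner2 τ τ x
          + α x j1 * (κ x * τ x i1 + α x i1 * P.inner2 τ τ x)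
          + τ x j1 * (-(κ x * β x i1) - P.inner2 β β x * τ x i1) := by
      intro i1 j1
      calc ∑ k, P.up τ x k * P.Dt (P.Dv τ) x i1 j1 k
          = ∑ k, (P.Ds κ x i1 * (P.up τ x k * P.g x j1 k)
              + P.Dv α x i1 j1 * (P.up τ x k * τ x k)
              + α x j1 * (P.up τ x k * P.Dv τ x i1 k)
              + P.Dv τ x i1 j1 * (P.up τ x k * β x k)
              + τ x j1 * (P.up τ x k * P.Dv β x i1 k)) := by
            refine Finset.sum_congr rfl fun k _ => ?_
            rw [e2 x i1 j1 k]
            ring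
        _ = P.Ds κ x i1 * (∑ k, P.up τ x k * P.g x j1 k)
            + P.Dv α x i1 j1 * (∑ k, P.up τ x k * τ x k)
            + α x j1 * (∑ k, P.up τ x k * P.Dv τ x i1 k)
            + P.Dv τ x i1 j1 * (∑ k, P.up τ x k * β x k)
            + τ x j1 * (∑ k, P.up τ x k * P.Dv β x i1 k) := by
            simp only [Finset.sum_add_distrib, ← Finset.mul_sum]
        _ = P.Ds κ x i1 * τ x j1 + P.Dv α x i1 j1 * P.inner2 τ τ x
            + α x j1 * (κ x * τ x i1 + α x i1 * P.inner2 τ τ x)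
            + τ x j1 * (-(κ x * β x i1) - P.inner2 β β x * τ x i1) := by
            rw [S1 j1, S2, S3 i1, S4, S5 i1]
            ring
    have h1 : ∑ k, P.up τ x k * (P.Dt (P.Dv τ) x i j k - P.Dt (P.Dv τ) x j i k) = 0 := by
      calc ∑ k, P.up τ x k * (P.Dt (P.Dv τ) x i j k - P.Dt (P.Dv τ) x j i k)
          = ∑ k, P.up τ x k * (∑ m, P.Riem x i j k m * P.up τ x m) := by
            refine Finset.sum_congr rfl fun k _ => ?_
            rw [hRic k]
        _ = 0 := hZ
    have h2 : ∑ k, P.up τ x k * (P.Dt (P.Dv τ) x i j k - P.Dt (P.Dv τ) x j i k)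
        = (∑ k, P.up τ x k * P.Dt (P.Dv τ) x i j k)
          - ∑ k, P.up τ x k * P.Dt (P.Dv τ) x j i k := by
      rw [← Finset.sum_sub_distrib]
      exact Finset.sum_congr rfl fun k _ => by ring
    rw [h2, key i j, key j i] at h1
    linear_combination h1
  refine ⟨main, ?_⟩
  constructor
  · intro hsym x
    have hτx : ∃ i0, τ x i0 ≠ 0 := by
      by_contra hcon
      push_neg at hcon
      have hz : P.inner2 τ τ x = 0 := by
        simp only [PseudoRiemannData.inner2]
        refine Finset.sum_eq_zero fun k _ => ?_
        rw [hcon k]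
        ring
      have := ht x
      rw [hz] at this
      exact lt_irrefl 0 this
    obtain ⟨i0, hi0⟩ := hτx
    refine ⟨(P.Ds κ x i0 - κ x * α x i0 - κ x * β x i0) / τ x i0, fun j => ?_⟩
    have h1 := main x i0 j
    rw [hsym x i0 j, sub_self, zero_mul] at h1
    rw [div_mul_eq_mul_div, eq_div_iff hi0]
    linear_combination -h1
  · intro hc x i j
    obtain ⟨c, hcx⟩ := hc x
    have h1 := main x i j
    rw [hcx i, hcx j] at h1
    have hzero : (P.Dv α x i j - P.Dv α x j i) * P.inner2 τ τ x = 0 := by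
      rw [h1]
      ring
    rcases mul_eq_zero.mp hzero with h' | h'
    · linarith [h']
    · exact absurd h' (ne_of_lt (ht x))
end
end

section
/- For a null doubly torqued vector field τ on a d-dimensional Lorentzian manifold, all three optical scalars vanish: the expansion Θ = (∇_k τ^k)/(d−2) = 0, the twist ω² = −∇_{[k}τ_{j]}∇^k τ^j = 0, and the shear σ² = ∇_{(k}τ_{j)}∇^k τ^j − (d−2)Θ² = 0. -/
open scoped BigOperators
open Finset

noncomputable section

variable {M : Type*} {n : ℕ}

/-- all three optical scalars (expansion, twist, shear) of a null doubly
torqued vector vanish. -/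
theorem optical_scalars_vanish (P : PseudoRiemannData M n) (hn : 2 < n)
    (τ α β : M → Fin n → ℝ)
    (hnull : ∀ x, P.inner2 τ τ x = 0)
    (hdt : ∀ (x : M) (j k : Fin n), P.Dv τ x j k = α x j * τ x k + τ x j * β x k)
    (hα : ∀ x, P.inner2 α τ x = 0) (hβ : ∀ x, P.inner2 β τ x = 0) :
    ∀ x : M,
      -- expansion Θ = (∇_k τ^k)/(n−2)
      ((∑ k, ∑ j, P.ginv x k j * P.Dv τ x k j) / ((n : ℝ) - 2) = 0)
      -- twist ω² = −∇_{[k}τ_{j]} ∇^k τ^j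
      ∧ (-(∑ k, ∑ j, ((P.Dv τ x k j - P.Dv τ x j k) / 2)
            * (∑ a, ∑ b, P.ginv x k a * P.ginv x j b * P.Dv τ x a b)) = 0)
      -- shear σ² = ∇_{(k}τ_{j)} ∇^k τ^j − (n−2) Θ²
      ∧ ((∑ k, ∑ j, ((P.Dv τ x k j + P.Dv τ x j k) / 2)
            * (∑ a, ∑ b, P.ginv x k a * P.ginv x j b * P.Dv τ x a b))
          - ((n : ℝ) - 2)
            * ((∑ k, ∑ j, P.ginv x k j * P.Dv τ x k j) / ((n : ℝ) - 2)) ^ 2 = 0) := by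

  intro x
  -- helper inner products
  have hτα : ∀ y, (∑ k, τ y k * P.up α y k) = 0 := by
    intro y
    have h : (∑ k, τ y k * P.up α y k) = P.inner2 α τ y := by
      simp only [PseudoRiemannData.up, PseudoRiemannData.inner2, Finset.mul_sum]
      rw [Finset.sum_comm]
      exact Finset.sum_congr rfl fun j _ => Finset.sum_congr rfl fun k _ => by
        rw [P.ginv_symm y k j]; ring
    rw [h, hα]
  have hτβ : ∀ y, (∑ k, τ y k * P.up β y k) = 0 := by
    intro y
    have h : (∑ k, τ y k * P.up β y k) = P.inner2 β τ y := by
      simp only [PseudoRiemannData.up, PseudoRiemannData.inner2, Finset.mul_sum]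
      rw [Finset.sum_comm]
      exact Finset.sum_congr rfl fun j _ => Finset.sum_congr rfl fun k _ => by
        rw [P.ginv_symm y k j]; ring
    rw [h, hβ]
  have hατ : ∀ y, (∑ k, α y k * P.up τ y k) = 0 := hα
  have hβτ : ∀ y, (∑ k, β y k * P.up τ y k) = 0 := hβ
  have hττ : ∀ y, (∑ k, τ y k * P.up τ y k) = 0 := hnull
  -- trace vanishes
  have htrace : (∑ k, ∑ j, P.ginv x k j * P.Dv τ x k j) = 0 := by
    have h1 : ∀ k, (∑ j, P.ginv x k j * P.Dv τ x k j)
        = α x k * P.up τ x k + τ x k * P.up β x k := by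
      intro k
      simp only [hdt, PseudoRiemannData.up, Finset.mul_sum, ← Finset.sum_add_distrib]
      exact Finset.sum_congr rfl fun j _ => by ring
    simp only [h1]
    rw [Finset.sum_add_distrib, hατ, hτβ]; ring
  -- the raised derivative
  have hinner : ∀ k j, (∑ a, ∑ b, P.ginv x k a * P.ginv x j b * P.Dv τ x a b)
      = P.up α x k * P.up τ x j + P.up τ x k * P.up β x j := by
    intro k j
    simp only [hdt, PseudoRiemannData.up, Finset.sum_mul_sum, ← Finset.sum_add_distrib]
    exact Finset.sum_congr rfl fun a _ => Finset.sum_congr rfl fun b _ => by ring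
  -- ∇_k τ_j ∇^k τ^j = 0
  have hA : (∑ k, ∑ j, P.Dv τ x k j
      * (∑ a, ∑ b, P.ginv x k a * P.ginv x j b * P.Dv τ x a b)) = 0 := by
    have h : ∀ k, (∑ j, P.Dv τ x k j
        * (∑ a, ∑ b, P.ginv x k a * P.ginv x j b * P.Dv τ x a b))
        = τ x k * P.up τ x k * (∑ j, β x j * P.up β x j) := by
      intro k
      have h2 : (∑ j, P.Dv τ x k j
          * (∑ a, ∑ b, P.ginv x k a * P.ginv x j b * P.Dv τ x a b))
          = (∑ j, (α x k * P.up α x k * (τ x j * P.up τ x j)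
              + α x k * P.up τ x k * (τ x j * P.up β x j)
              + τ x k * P.up α x k * (β x j * P.up τ x j)
              + τ x k * P.up τ x k * (β x j * P.up β x j))) :=
        Finset.sum_congr rfl fun j _ => by rw [hinner, hdt]; ring
      rw [h2]
      simp only [Finset.sum_add_distrib, ← Finset.mul_sum]
      rw [hττ, hτβ, hβτ]; ring
    simp only [h]
    rw [← Finset.sum_mul, hττ, zero_mul]
  -- ∇_j τ_k ∇^k τ^j = 0
  have hB : (∑ k, ∑ j, P.Dv τ x j k
      * (∑ a, ∑ b, P.ginv x k a * P.ginv x j b * P.Dv τ x a b)) = 0 := by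
    have h : ∀ k, (∑ j, P.Dv τ x j k
        * (∑ a, ∑ b, P.ginv x k a * P.ginv x j b * P.Dv τ x a b))
        = τ x k * P.up τ x k * (∑ j, α x j * P.up β x j) := by
      intro k
      have h2 : (∑ j, P.Dv τ x j k
          * (∑ a, ∑ b, P.ginv x k a * P.ginv x j b * P.Dv τ x a b))
          = (∑ j, (τ x k * P.up α x k * (α x j * P.up τ x j)
              + τ x k * P.up τ x k * (α x j * P.up β x j)
              + β x k * P.up α x k * (τ x j * P.up τ x j)
              + β x k * P.up τ x k * (τ x j * P.up β x j))) :=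
        Finset.sum_congr rfl fun j _ => by rw [hinner, hdt]; ring
      rw [h2]
      simp only [Finset.sum_add_distrib, ← Finset.mul_sum]
      rw [hατ, hττ, hτβ]; ring
    simp only [h]
    rw [← Finset.sum_mul, hττ, zero_mul]
  refine ⟨by rw [htrace]; simp, ?_, ?_⟩
  · have h : (∑ k, ∑ j, ((P.Dv τ x k j - P.Dv τ x j k) / 2)
        * (∑ a, ∑ b, P.ginv x k a * P.ginv x j b * P.Dv τ x a b))
        = ((∑ k, ∑ j, P.Dv τ x k j
            * (∑ a, ∑ b, P.ginv x k a * P.ginv x j b * P.Dv τ x a b))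
          - (∑ k, ∑ j, P.Dv τ x j k
            * (∑ a, ∑ b, P.ginv x k a * P.ginv x j b * P.Dv τ x a b))) / 2 := by
      rw [← Finset.sum_sub_distrib, Finset.sum_div]
      exact Finset.sum_congr rfl fun k _ => by
        rw [← Finset.sum_sub_distrib, Finset.sum_div]
        exact Finset.sum_congr rfl fun j _ => by ring
    rw [h, hA, hB]; ring
  · have h : (∑ k, ∑ j, ((P.Dv τ x k j + P.Dv τ x j k) / 2)
        * (∑ a, ∑ b, P.ginv x k a * P.ginv x j b * P.Dv τ x a b))
        = ((∑ k, ∑ j, P.Dv τ x k j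
            * (∑ a, ∑ b, P.ginv x k a * P.ginv x j b * P.Dv τ x a b))
          + (∑ k, ∑ j, P.Dv τ x j k
            * (∑ a, ∑ b, P.ginv x k a * P.ginv x j b * P.Dv τ x a b))) / 2 := by
      rw [← Finset.sum_add_distrib, Finset.sum_div]
      exact Finset.sum_congr rfl fun k _ => by
        rw [← Finset.sum_add_distrib, Finset.sum_div]
        exact Finset.sum_congr rfl fun j _ => by ring
    rw [h, hA, hB, htrace]; ring
end
end

section
/- Let τ be a null Killing vector field that is hypersurface orthogonal in the sense that τ_i = λ ∇_i f for smooth functions λ (nowhere zero) and f. Then τ is a null doubly torqued vector with β = −α: ∇_i τ_j = α_i τ_j − τ_i α_j where α_i = (∇_i λ)/(2λ) (projected orthogonal to τ), and α(τ) = 0. -/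
open scoped BigOperators
open Finset

noncomputable section

variable {M : Type*} {n : ℕ}

section AuxLemmas

variable {M : Type*} {n : ℕ} (P : PseudoRiemannData M n)

private lemma ds_zero : P.Ds (fun _ => (0:ℝ)) = fun _ _ => 0 := by
  have h := P.Ds_add (fun _ => (0:ℝ)) (fun _ => (0:ℝ))
  have h0 : (fun (_ : M) => (0:ℝ) + 0) = (fun _ => (0:ℝ)) := by funext x; ring
  rw [h0] at h
  funext x i
  have h2 := congrFun (congrFun h x) i
  simp only at h2
  linarith

private lemma ds_one : P.Ds (fun _ => (1:ℝ)) = fun _ _ => 0 := by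
  have h := P.Ds_mul (fun _ => (1:ℝ)) (fun _ => (1:ℝ))
  have h0 : (fun (_ : M) => (1:ℝ) * 1) = (fun _ => (1:ℝ)) := by funext x; ring
  rw [h0] at h
  funext x i
  have h2 := congrFun (congrFun h x) i
  simp only [one_mul] at h2
  linarith

private lemma ds_sum {ι : Type*} (t : Finset ι) (F : ι → M → ℝ) :
    P.Ds (fun x => ∑ m ∈ t, F m x) = fun x i => ∑ m ∈ t, P.Ds (F m) x i := by
  classical
  induction t using Finset.induction_on with
  | empty => simpa using ds_zero P
  | @insert a s ha ih =>
      have h1 : (fun x => ∑ m ∈ insert a s, F m x)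
          = fun x => F a x + ∑ m ∈ s, F m x := by
        funext x; rw [Finset.sum_insert ha]
      rw [h1, P.Ds_add, ih]
      funext x i
      rw [Finset.sum_insert ha]

private lemma dv_zero : P.Dv (fun _ _ => (0:ℝ)) = fun _ _ _ => 0 := by
  have h := P.Dv_add (fun _ _ => (0:ℝ)) (fun _ _ => (0:ℝ))
  have h0 : (fun (_ : M) (_ : Fin n) => (0:ℝ) + 0) = (fun _ _ => (0:ℝ)) := by
    funext x k; ring
  rw [h0] at h
  funext x j k
  have h2 := congrFun (congrFun (congrFun h x) j) k
  simp only at h2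
  linarith

private lemma dv_sum {ι : Type*} (t : Finset ι) (F : ι → M → Fin n → ℝ) :
    P.Dv (fun x k => ∑ m ∈ t, F m x k) = fun x j k => ∑ m ∈ t, P.Dv (F m) x j k := by
  classical
  induction t using Finset.induction_on with
  | empty => simpa using dv_zero P
  | @insert a s ha ih =>
      have h1 : (fun x k => ∑ m ∈ insert a s, F m x k)
          = fun x k => F a x k + ∑ m ∈ s, F m x k := by
        funext x k; rw [Finset.sum_insert ha]
      rw [h1, P.Dv_add, ih]
      funext x j k
      rw [Finset.sum_insert ha]

private lemma dt_zero : P.Dt (fun _ _ _ => (0:ℝ)) = fun _ _ _ _ => 0 := by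
  have h := P.Dt_add (fun _ _ _ => (0:ℝ)) (fun _ _ _ => (0:ℝ))
  have h0 : (fun (_ : M) (_ _ : Fin n) => (0:ℝ) + 0) = (fun _ _ _ => (0:ℝ)) := by
    funext x j k; ring
  rw [h0] at h
  funext x i j k
  have h2 := congrFun (congrFun (congrFun (congrFun h x) i) j) k
  simp only at h2
  linarith

private lemma dt_sum {ι : Type*} (t : Finset ι) (F : ι → M → Fin n → Fin n → ℝ) :
    P.Dt (fun x j k => ∑ m ∈ t, F m x j k)
      = fun x i j k => ∑ m ∈ t, P.Dt (F m) x i j k := by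
  classical
  induction t using Finset.induction_on with
  | empty => simpa using dt_zero P
  | @insert a s ha ih =>
      have h1 : (fun x j k => ∑ m ∈ insert a s, F m x j k)
          = fun x j k => F a x j k + ∑ m ∈ s, F m x j k := by
        funext x j k; rw [Finset.sum_insert ha]
      rw [h1, P.Dt_add, ih]
      funext x i j k
      rw [Finset.sum_insert ha]

/-- "Christoffel" data: covariant derivative of the constant basis one-forms. -/
private def Gam (P : PseudoRiemannData M n) (m : Fin n) : M → Fin n → Fin n → ℝ :=
  P.Dv (fun _ k => if k = m then (1:ℝ) else 0)

private lemma dv_decomp (σ : M → Fin n → ℝ) (x : M) (j k : Fin n) :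
    P.Dv σ x j k
      = P.Ds (fun y => σ y k) x j + ∑ m, σ x m * Gam P m x j k := by
  have h0 : σ = fun x k => ∑ m, σ x m * (if k = m then (1:ℝ) else 0) := by
    funext x k; simp
  have h1 := congrFun (congrFun (congrFun (congrArg P.Dv h0) x) j) k
  have hsum := congrFun (congrFun (congrFun (dv_sum P Finset.univ
      (fun (m : Fin n) (x : M) (k : Fin n) =>
        σ x m * (if k = m then (1:ℝ) else 0))) x) j) k
  have h3 : P.Dv σ x j k
      = ∑ m, (P.Ds (fun y => σ y m) x j * (if k = m then (1:ℝ) else 0)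
          + σ x m * Gam P m x j k) :=
    (h1.trans hsum).trans (Finset.sum_congr rfl fun m _ =>
      congrFun (congrFun (congrFun (P.Dv_smul (fun x => σ x m)
        (fun _ k => if k = m then (1:ℝ) else 0)) x) j) k)
  rw [h3, Finset.sum_add_distrib]
  congr 1
  simp

private lemma dt_g_zero (x : M) (i j k : Fin n) : P.Dt P.g x i j k = 0 := by
  have h := P.Dt_scalar_g (fun _ => 1)
  have h1 : (fun (x : M) (j k : Fin n) => (1:ℝ) * P.g x j k) = P.g := by
    funext x j k; rw [one_mul]
  rw [h1] at h
  rw [h, ds_one]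
  simp

private lemma dt_g_decomp (x : M) (i j k : Fin n) :
    P.Dt P.g x i j k
      = P.Ds (fun y => P.g y j k) x i
        + (∑ m, P.g x m k * Gam P m x i j)
        + (∑ m, P.g x j m * Gam P m x i k) := by
  have h0 : P.g = fun x j k => ∑ m, ∑ p,
      (P.g x m p * (if j = m then (1:ℝ) else 0)) * (if k = p then (1:ℝ) else 0) := by
    funext x j k
    simp
  have h1 := congrFun (congrFun (congrFun (congrFun (congrArg P.Dt h0) x) i) j) k
  have hsum1 := congrFun (congrFun (congrFun (congrFun (dt_sum P Finset.univ
      (fun (m : Fin n) (x : M) (j k : Fin n) => ∑ p,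
        (P.g x m p * (if j = m then (1:ℝ) else 0)) * (if k = p then (1:ℝ) else 0))) x) i) j) k
  have h2 : ∀ m : Fin n,
      P.Dt (fun x j k => ∑ p,
          (P.g x m p * (if j = m then (1:ℝ) else 0)) * (if k = p then (1:ℝ) else 0)) x i j k
        = ∑ p, ((P.Ds (fun y => P.g y m p) x i * (if j = m then (1:ℝ) else 0)
              + P.g x m p * Gam P m x i j) * (if k = p then (1:ℝ) else 0)
            + (P.g x m p * (if j = m then (1:ℝ) else 0)) * Gam P p x i k) := by
    intro m
    have hsum2 := congrFun (congrFun (congrFun (congrFun (dt_sum P Finset.univ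
        (fun (p : Fin n) (x : M) (j k : Fin n) =>
          (P.g x m p * (if j = m then (1:ℝ) else 0)) * (if k = p then (1:ℝ) else 0))) x) i) j) k
    refine hsum2.trans (Finset.sum_congr rfl fun p _ => ?_)
    have ht := congrFun (congrFun (congrFun (congrFun (P.Dt_tensor
        (fun x j => P.g x m p * (if j = m then (1:ℝ) else 0))
        (fun _ k => if k = p then (1:ℝ) else 0)) x) i) j) k
    have hv := congrFun (congrFun (congrFun (P.Dv_smul (fun x => P.g x m p)
        (fun _ j => if j = m then (1:ℝ) else 0)) x) i) j
    rw [ht, hv]; rfl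
  have h4 := (h1.trans hsum1).trans (Finset.sum_congr rfl fun m _ => h2 m)
  rw [h4]
  have e1 : ∀ m : Fin n, ∑ p, ((P.Ds (fun y => P.g y m p) x i * (if j = m then (1:ℝ) else 0)
              + P.g x m p * Gam P m x i j) * (if k = p then (1:ℝ) else 0)
            + (P.g x m p * (if j = m then (1:ℝ) else 0)) * Gam P p x i k)
      = (P.Ds (fun y => P.g y m k) x i * (if j = m then (1:ℝ) else 0)
          + P.g x m k * Gam P m x i j)
        + (if j = m then (1:ℝ) else 0) * (∑ p, P.g x m p * Gam P p x i k) := by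
    intro m
    rw [Finset.sum_add_distrib, Finset.mul_sum]
    congr 1
    · simp [add_mul, mul_ite, Finset.sum_add_distrib]
    · exact Finset.sum_congr rfl fun p _ => by ring
  rw [Finset.sum_congr rfl (fun m _ => e1 m), Finset.sum_add_distrib]
  have e2 : ∑ m, (if j = m then (1:ℝ) else 0) * (∑ p, P.g x m p * Gam P p x i k)
      = ∑ p, P.g x j p * Gam P p x i k := by
    simp
  rw [e2]
  have e3 : ∑ m, (P.Ds (fun y => P.g y m k) x i * (if j = m then (1:ℝ) else 0)
      + P.g x m k * Gam P m x i j)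
      = P.Ds (fun y => P.g y j k) x i + ∑ m, P.g x m k * Gam P m x i j := by
    rw [Finset.sum_add_distrib]
    congr 1
    simp
  rw [e3]

private lemma dginv_rel (x : M) (i j l : Fin n) :
    (∑ k, (P.g x j k * P.Ds (fun y => P.ginv y k l) x i
        + P.ginv x k l * P.Ds (fun y => P.g y j k) x i)) = 0 := by
  have h0 : (fun y => ∑ k, P.g y j k * P.ginv y k l)
      = (fun _ : M => if j = l then (1:ℝ) else 0) := by
    funext y; exact P.g_ginv y j l
  have h1 := congrFun (congrFun (congrArg P.Ds h0) x) i
  have h2 := congrFun (congrFun (ds_sum P Finset.univ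
      (fun (k : Fin n) (y : M) => P.g y j k * P.ginv y k l)) x) i
  have h3 : P.Ds (fun _ : M => if j = l then (1:ℝ) else 0) x i = 0 := by
    by_cases hjl : j = l
    · rw [show (fun _ : M => if j = l then (1:ℝ) else 0) = (fun _ : M => (1:ℝ)) from by
        funext y; simp [hjl], ds_one]
    · rw [show (fun _ : M => if j = l then (1:ℝ) else 0) = (fun _ : M => (0:ℝ)) from by
        funext y; simp [hjl], ds_zero]
  have h4 : ∀ k : Fin n, P.Ds (fun y => P.g y j k * P.ginv y k l) x i
      = P.g x j k * P.Ds (fun y => P.ginv y k l) x i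
        + P.ginv x k l * P.Ds (fun y => P.g y j k) x i := fun k =>
    congrFun (congrFun (P.Ds_mul (fun y => P.g y j k) (fun y => P.ginv y k l)) x) i
  calc (∑ k, (P.g x j k * P.Ds (fun y => P.ginv y k l) x i
        + P.ginv x k l * P.Ds (fun y => P.g y j k) x i))
      = ∑ k, P.Ds (fun y => P.g y j k * P.ginv y k l) x i :=
        Finset.sum_congr rfl fun k _ => (h4 k).symm
    _ = P.Ds (fun y => ∑ k, P.g y j k * P.ginv y k l) x i := h2.symm
    _ = 0 := h1.trans h3

private lemma contraction_lemma {n : ℕ}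
    (g ginv : Fin n → Fin n → ℝ) (a Dτ F u : Fin n → ℝ)
    (DG Dg : Fin n → Fin n → ℝ) (c : Fin n → Fin n → ℝ)
    (gsymm : ∀ j k, g j k = g k j)
    (ginvsymm : ∀ j k, ginv j k = ginv k j)
    (gginv : ∀ i j, (∑ k, g i k * ginv k j) = (if i = j then (1:ℝ) else 0))
    (hu : ∀ k, u k = ∑ j, ginv k j * a j)
    (DGsymm : ∀ j k, DG j k = DG k j)
    (hDτ : ∀ k, Dτ k = F k - ∑ m, a m * c m k)
    (hDg : ∀ j k, Dg j k = -(∑ m, g m k * c m j) - (∑ m, g j m * c m k))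
    (hDGrel : ∀ j l, (∑ k, (g j k * DG k l + ginv k l * Dg j k)) = 0)
    (hE : (∑ j, (a j * (∑ k, (ginv j k * Dτ k + a k * DG j k))
          + u j * Dτ j)) = 0) :
    (∑ k, u k * F k) = 0 := by
  classical
  have s1 : ∀ k, (∑ j, g k j * u j) = a k := by
    intro k
    calc (∑ j, g k j * u j) = ∑ j, ∑ m, g k j * ginv j m * a m := by
          refine Finset.sum_congr rfl fun j _ => ?_
          rw [hu j, Finset.mul_sum]
          exact Finset.sum_congr rfl fun m _ => by ring
      _ = ∑ m, ∑ j, g k j * ginv j m * a m := Finset.sum_comm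
      _ = ∑ m, (∑ j, g k j * ginv j m) * a m := by
          refine Finset.sum_congr rfl fun m _ => ?_
          rw [Finset.sum_mul]
      _ = ∑ m, (if k = m then (1:ℝ) else 0) * a m := by
          refine Finset.sum_congr rfl fun m _ => ?_
          rw [gginv]
      _ = a k := by simp
  have s2 : ∀ l, (∑ k, a k * DG k l) = -(∑ j, ∑ k, u j * ginv k l * Dg j k) := by
    intro l
    have h0 : (∑ j, u j * (∑ k, (g j k * DG k l + ginv k l * Dg j k))) = 0 := by
      simp [hDGrel]
    have h1 : (∑ j, u j * (∑ k, (g j k * DG k l + ginv k l * Dg j k)))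
        = (∑ j, ∑ k, u j * g j k * DG k l) + (∑ j, ∑ k, u j * ginv k l * Dg j k) := by
      rw [← Finset.sum_add_distrib]
      refine Finset.sum_congr rfl fun j _ => ?_
      rw [Finset.mul_sum, ← Finset.sum_add_distrib]
      exact Finset.sum_congr rfl fun k _ => by ring
    have h2 : (∑ j, ∑ k, u j * g j k * DG k l) = ∑ k, a k * DG k l := by
      rw [Finset.sum_comm]
      refine Finset.sum_congr rfl fun k _ => ?_
      calc (∑ j, u j * g j k * DG k l) = (∑ j, g k j * u j) * DG k l := by
            rw [Finset.sum_mul]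
            exact Finset.sum_congr rfl fun j _ => by rw [gsymm j k]; ring
        _ = a k * DG k l := by rw [s1]
    linarith [h0, h1, h2]
  have s3 : (∑ j, a j * (∑ k, a k * DG j k))
      = 2 * (∑ m, a m * (∑ k, u k * c m k)) := by
    have t1 : (∑ j, a j * (∑ k, a k * DG j k)) = ∑ l, a l * (∑ k, a k * DG k l) := by
      refine Finset.sum_congr rfl fun l _ => ?_
      rw [Finset.mul_sum, Finset.mul_sum]
      exact Finset.sum_congr rfl fun k _ => by rw [DGsymm l k]
    have t2 : (∑ l, a l * (∑ k, a k * DG k l))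
        = -(∑ l, ∑ j, ∑ k, u j * ginv k l * Dg j k * a l) := by
      have t2' : ∀ l, a l * (∑ k, a k * DG k l)
          = -(∑ j, ∑ k, u j * ginv k l * Dg j k * a l) := by
        intro l
        rw [s2 l, mul_neg]
        congr 1
        rw [Finset.mul_sum]
        refine Finset.sum_congr rfl fun j _ => ?_
        rw [Finset.mul_sum]
        exact Finset.sum_congr rfl fun k _ => by ring
      rw [Finset.sum_congr rfl fun l _ => t2' l]
      simp only [Finset.sum_neg_distrib]
    have t3 : (∑ l, ∑ j, ∑ k, u j * ginv k l * Dg j k * a l)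
        = ∑ j, ∑ k, u j * Dg j k * u k := by
      rw [Finset.sum_comm]
      refine Finset.sum_congr rfl fun j _ => ?_
      rw [Finset.sum_comm]
      refine Finset.sum_congr rfl fun k _ => ?_
      rw [hu k, Finset.mul_sum]
      exact Finset.sum_congr rfl fun l _ => by ring
    have t4 : (∑ j, ∑ k, u j * Dg j k * u k)
        = -((∑ m, a m * (∑ k, u k * c m k)) + (∑ m, a m * (∑ k, u k * c m k))) := by
      have p1 : ∀ j k : Fin n, u j * Dg j k * u k
          = -((∑ m, u j * u k * (g m k * c m j)) + (∑ m, u j * u k * (g j m * c m k))) := by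
        intro j k
        rw [hDg j k, ← Finset.mul_sum, ← Finset.mul_sum]
        ring
      have p2 : (∑ j, ∑ k, ∑ m, u j * u k * (g m k * c m j))
          = ∑ m, a m * (∑ k, u k * c m k) := by
        have q1 : (∑ j, ∑ k, ∑ m, u j * u k * (g m k * c m j))
            = ∑ m, ∑ j, ∑ k, u j * u k * (g m k * c m j) :=
          calc (∑ j, ∑ k, ∑ m, u j * u k * (g m k * c m j))
              = ∑ j, ∑ m, ∑ k, u j * u k * (g m k * c m j) :=
                Finset.sum_congr rfl fun _ _ => Finset.sum_comm
            _ = ∑ m, ∑ j, ∑ k, u j * u k * (g m k * c m j) := Finset.sum_comm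
        rw [q1]
        refine Finset.sum_congr rfl fun m _ => ?_
        calc (∑ j, ∑ k, u j * u k * (g m k * c m j))
            = ∑ j, (u j * c m j) * (∑ k, g m k * u k) := by
              refine Finset.sum_congr rfl fun j _ => ?_
              rw [Finset.mul_sum]
              exact Finset.sum_congr rfl fun k _ => by ring
          _ = ∑ j, (u j * c m j) * a m := by
              refine Finset.sum_congr rfl fun j _ => ?_
              rw [s1 m]
          _ = a m * (∑ k, u k * c m k) := by
              rw [Finset.mul_sum]
              exact Finset.sum_congr rfl fun j _ => by ring
      have p3 : (∑ j, ∑ k, ∑ m, u j * u k * (g j m * c m k))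
          = ∑ m, a m * (∑ k, u k * c m k) := by
        have q1 : (∑ j, ∑ k, ∑ m, u j * u k * (g j m * c m k))
            = ∑ m, ∑ k, ∑ j, u j * u k * (g j m * c m k) :=
          calc (∑ j, ∑ k, ∑ m, u j * u k * (g j m * c m k))
              = ∑ j, ∑ m, ∑ k, u j * u k * (g j m * c m k) :=
                Finset.sum_congr rfl fun _ _ => Finset.sum_comm
            _ = ∑ m, ∑ j, ∑ k, u j * u k * (g j m * c m k) := Finset.sum_comm
            _ = ∑ m, ∑ k, ∑ j, u j * u k * (g j m * c m k) :=
                Finset.sum_congr rfl fun _ _ => Finset.sum_comm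
        rw [q1]
        refine Finset.sum_congr rfl fun m _ => ?_
        calc (∑ k, ∑ j, u j * u k * (g j m * c m k))
            = ∑ k, (u k * c m k) * (∑ j, g m j * u j) := by
              refine Finset.sum_congr rfl fun k _ => ?_
              rw [Finset.mul_sum]
              exact Finset.sum_congr rfl fun j _ => by rw [gsymm m j]; ring
          _ = ∑ k, (u k * c m k) * a m := by
              refine Finset.sum_congr rfl fun k _ => ?_
              rw [s1 m]
          _ = a m * (∑ k, u k * c m k) := by
              rw [Finset.mul_sum]
              exact Finset.sum_congr rfl fun k _ => by ring
      calc (∑ j, ∑ k, u j * Dg j k * u k)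
          = ∑ j, ∑ k, -((∑ m, u j * u k * (g m k * c m j))
              + (∑ m, u j * u k * (g j m * c m k))) := by
            exact Finset.sum_congr rfl fun j _ => Finset.sum_congr rfl fun k _ => p1 j k
        _ = -(∑ j, ∑ k, ((∑ m, u j * u k * (g m k * c m j))
              + (∑ m, u j * u k * (g j m * c m k)))) := by
            simp only [Finset.sum_neg_distrib]
        _ = -((∑ j, ∑ k, ∑ m, u j * u k * (g m k * c m j))
              + (∑ j, ∑ k, ∑ m, u j * u k * (g j m * c m k))) := by
            congr 1
            rw [← Finset.sum_add_distrib]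
            exact Finset.sum_congr rfl fun j _ => by rw [← Finset.sum_add_distrib]
        _ = -((∑ m, a m * (∑ k, u k * c m k)) + (∑ m, a m * (∑ k, u k * c m k))) := by
            rw [p2, p3]
    linarith [t1, t2, t3, t4]
  have s4 : (∑ j, a j * (∑ k, ginv j k * Dτ k)) = ∑ k, u k * Dτ k := by
    calc (∑ j, a j * (∑ k, ginv j k * Dτ k)) = ∑ j, ∑ k, a j * ginv j k * Dτ k := by
          refine Finset.sum_congr rfl fun j _ => ?_
          rw [Finset.mul_sum]
          exact Finset.sum_congr rfl fun k _ => by ring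
      _ = ∑ k, ∑ j, a j * ginv j k * Dτ k := Finset.sum_comm
      _ = ∑ k, u k * Dτ k := by
          refine Finset.sum_congr rfl fun k _ => ?_
          rw [hu k, Finset.sum_mul]
          exact Finset.sum_congr rfl fun j _ => by rw [ginvsymm j k]; ring
  have s5 : (∑ j, (a j * (∑ k, (ginv j k * Dτ k + a k * DG j k)) + u j * Dτ j))
      = (∑ j, a j * (∑ k, ginv j k * Dτ k)) + (∑ j, a j * (∑ k, a k * DG j k))
        + (∑ j, u j * Dτ j) := by
    rw [← Finset.sum_add_distrib, ← Finset.sum_add_distrib]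
    refine Finset.sum_congr rfl fun j _ => ?_
    rw [Finset.sum_add_distrib, mul_add]
  have s6 : (∑ k, u k * Dτ k)
      = (∑ k, u k * F k) - ∑ m, a m * (∑ k, u k * c m k) := by
    calc (∑ k, u k * Dτ k) = ∑ k, (u k * F k - ∑ m, u k * (a m * c m k)) := by
          refine Finset.sum_congr rfl fun k _ => ?_
          rw [hDτ k, mul_sub, Finset.mul_sum]
      _ = (∑ k, u k * F k) - ∑ k, ∑ m, u k * (a m * c m k) := Finset.sum_sub_distrib _ _
      _ = (∑ k, u k * F k) - ∑ m, ∑ k, u k * (a m * c m k) := by rw [Finset.sum_comm]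
      _ = (∑ k, u k * F k) - ∑ m, a m * (∑ k, u k * c m k) := by
          congr 1
          refine Finset.sum_congr rfl fun m _ => ?_
          rw [Finset.mul_sum]
          exact Finset.sum_congr rfl fun k _ => by ring
  linarith [hE, s3, s4, s5, s6]

end AuxLemmas

/-- a null hypersurface orthogonal Killing vector (`τ_i = λ ∇_i f`) is a
doubly torqued vector with `β = −α`, where `α_i = ∇_i λ/(2λ)` and `α(τ) = 0`. -/
theorem null_HO_killing_is_doublyTorqued (P : PseudoRiemannData M n)
    (τ : M → Fin n → ℝ) (lam f : M → ℝ)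
    (hnull : ∀ x, P.inner2 τ τ x = 0)
    (hK : ∀ (x : M) (i j : Fin n), P.Dv τ x i j + P.Dv τ x j i = 0)
    (hlam : ∀ x, lam x ≠ 0)
    (hHO : ∀ (x : M) (i : Fin n), τ x i = lam x * P.Ds f x i) :
    (∀ x, P.inner2 (fun y i => P.Ds lam y i / (2 * lam y)) τ x = 0)
    ∧ ∀ (x : M) (i j : Fin n),
        P.Dv τ x i j = (P.Ds lam x i / (2 * lam x)) * τ x j
          - τ x i * (P.Ds lam x j / (2 * lam x)) := by
  classical
  -- Part 2: the doubly-torqued formula, from Killing + torsion-freeness + HO.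
  have hb : τ = fun x k => lam x * P.Ds f x k := by
    funext x k; exact hHO x k
  have hDv : ∀ (x : M) (i j : Fin n), P.Dv τ x i j
      = P.Ds lam x i * P.Ds f x j + lam x * P.Dv (P.Ds f) x i j := by
    intro x i j
    have h := congrFun (congrFun (congrFun (congrArg P.Dv hb) x) i) j
    rw [h]
    exact congrFun (congrFun (congrFun (P.Dv_smul lam (P.Ds f)) x) i) j
  have hF : ∀ (x : M) (i j : Fin n), P.Dv τ x i j
      = (P.Ds lam x i / (2 * lam x)) * τ x j - τ x i * (P.Ds lam x j / (2 * lam x)) := by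
    intro x i j
    have hk := hK x i j
    have h1 := hDv x i j
    have h2 := hDv x j i
    have hsym := P.hessian_symm f x i j
    have hl := hlam x
    rw [h1, h2, hsym] at hk
    rw [hHO x i, hHO x j, h1, hsym]
    have hgoal : P.Ds lam x i / (2 * lam x) * (lam x * P.Ds f x j)
        - lam x * P.Ds f x i * (P.Ds lam x j / (2 * lam x))
        = (P.Ds lam x i * P.Ds f x j - P.Ds lam x j * P.Ds f x i) / 2 := by
      field_simp
    rw [hgoal]
    linarith [hk]
  refine ⟨?_, hF⟩
  -- Part 1: orthogonality of α and τ.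
  intro x
  have key : ∀ i : Fin n,
      (∑ k, (∑ j, P.ginv x k j * τ x j) * P.Dv τ x i k) = 0 := by
    intro i
    refine contraction_lemma (P.g x) (P.ginv x) (τ x)
      (fun k => P.Ds (fun y => τ y k) x i)
      (fun k => P.Dv τ x i k)
      (fun k => ∑ j, P.ginv x k j * τ x j)
      (fun j k => P.Ds (fun y => P.ginv y j k) x i)
      (fun j k => P.Ds (fun y => P.g y j k) x i)
      (fun m k => Gam P m x i k)
      (P.g_symm x) (P.ginv_symm x) (P.g_ginv x)
      (fun k => rfl)
      ?_ ?_ ?_ ?_ ?_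
    · -- DG symmetric
      intro j k
      have hgg : (fun y => P.ginv y j k) = (fun y => P.ginv y k j) := by
        funext y; exact P.ginv_symm y j k
      show P.Ds (fun y => P.ginv y j k) x i = P.Ds (fun y => P.ginv y k j) x i
      rw [hgg]
    · -- hDτ
      intro k
      have h := dv_decomp P τ x i k
      linarith
    · -- hDg
      intro j k
      have h1 := dt_g_decomp P x i j k
      have h2 := dt_g_zero P x i j k
      linarith
    · -- hDGrel
      intro j l
      exact dginv_rel P x i j l
    · -- hE : expansion of the (vanishing) derivative of the null condition
      have hzero : P.Ds (P.inner2 τ τ) x i = 0 := by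
        have h : P.inner2 τ τ = (fun _ : M => (0:ℝ)) := funext hnull
        rw [h, ds_zero]
      have e0 : P.Ds (P.inner2 τ τ) x i
          = ∑ j, P.Ds (fun y => τ y j * ∑ k, P.ginv y j k * τ y k) x i :=
        congrFun (congrFun (ds_sum P Finset.univ
          (fun (j : Fin n) (y : M) => τ y j * ∑ k, P.ginv y j k * τ y k)) x) i
      have e1 : ∀ j : Fin n, P.Ds (fun y => τ y j * ∑ k, P.ginv y j k * τ y k) x i
          = τ x j * P.Ds (fun y => ∑ k, P.ginv y j k * τ y k) x i
            + (∑ k, P.ginv x j k * τ x k) * P.Ds (fun y => τ y j) x i := fun j =>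
        congrFun (congrFun (P.Ds_mul (fun y => τ y j)
          (fun y => ∑ k, P.ginv y j k * τ y k)) x) i
      have e2 : ∀ j : Fin n, P.Ds (fun y => ∑ k, P.ginv y j k * τ y k) x i
          = ∑ k, (P.ginv x j k * P.Ds (fun y => τ y k) x i
              + τ x k * P.Ds (fun y => P.ginv y j k) x i) := by
        intro j
        have hs := congrFun (congrFun (ds_sum P Finset.univ
            (fun (k : Fin n) (y : M) => P.ginv y j k * τ y k)) x) i
        refine hs.trans (Finset.sum_congr rfl fun k _ => ?_)
        exact congrFun (congrFun (P.Ds_mul (fun y => P.ginv y j k) (fun y => τ y k)) x) i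
      have final : (∑ j, (τ x j * (∑ k, (P.ginv x j k * P.Ds (fun y => τ y k) x i
            + τ x k * P.Ds (fun y => P.ginv y j k) x i))
          + (∑ k, P.ginv x j k * τ x k) * P.Ds (fun y => τ y j) x i))
          = P.Ds (P.inner2 τ τ) x i := by
        rw [e0]
        refine Finset.sum_congr rfl fun j _ => ?_
        rw [e1 j, e2 j]
      exact final.trans hzero
  have key2 : ∀ i : Fin n,
      τ x i * (∑ k, (∑ j, P.ginv x k j * τ x j) * (P.Ds lam x k / (2 * lam x))) = 0 := by
    intro i
    have h := key i
    have hsplit : (∑ k, (∑ j, P.ginv x k j * τ x j) * P.Dv τ x i k)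
        = (P.Ds lam x i / (2 * lam x)) * (∑ k, (∑ j, P.ginv x k j * τ x j) * τ x k)
          - τ x i * (∑ k, (∑ j, P.ginv x k j * τ x j) * (P.Ds lam x k / (2 * lam x))) := by
      calc (∑ k, (∑ j, P.ginv x k j * τ x j) * P.Dv τ x i k)
          = ∑ k, ((P.Ds lam x i / (2 * lam x)) * ((∑ j, P.ginv x k j * τ x j) * τ x k)
              - τ x i * ((∑ j, P.ginv x k j * τ x j) * (P.Ds lam x k / (2 * lam x)))) := by
            refine Finset.sum_congr rfl fun k _ => ?_
            rw [hF x i k]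
            ring
        _ = _ := by
            rw [Finset.sum_sub_distrib, ← Finset.mul_sum, ← Finset.mul_sum]
    have hn : (∑ k, (∑ j, P.ginv x k j * τ x j) * τ x k) = 0 := by
      have h0 := hnull x
      simp only [PseudoRiemannData.inner2, PseudoRiemannData.up] at h0
      calc (∑ k, (∑ j, P.ginv x k j * τ x j) * τ x k)
          = ∑ k, τ x k * ∑ j, P.ginv x k j * τ x j :=
            Finset.sum_congr rfl fun k _ => mul_comm _ _
        _ = 0 := h0
    rw [hsplit, hn, mul_zero] at h
    linarith [h]
  by_cases hz : ∀ k, τ x k = 0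
  · simp only [PseudoRiemannData.inner2, PseudoRiemannData.up]
    refine Finset.sum_eq_zero fun i _ => ?_
    have hup : (∑ j, P.ginv x i j * τ x j) = 0 :=
      Finset.sum_eq_zero fun j _ => by rw [hz j, mul_zero]
    rw [hup, mul_zero]
  · push_neg at hz
    obtain ⟨i0, hi0⟩ := hz
    have h := key2 i0
    have hS : (∑ k, (∑ j, P.ginv x k j * τ x j) * (P.Ds lam x k / (2 * lam x))) = 0 := by
      rcases mul_eq_zero.mp h with h' | h'
      · exact absurd h' hi0
      · exact h'
    simp only [PseudoRiemannData.inner2, PseudoRiemannData.up]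
    calc (∑ i, P.Ds lam x i / (2 * lam x) * ∑ j, P.ginv x i j * τ x j)
        = ∑ k, (∑ j, P.ginv x k j * τ x j) * (P.Ds lam x k / (2 * lam x)) :=
          Finset.sum_congr rfl fun k _ => mul_comm _ _
      _ = 0 := hS
end
end

section
/- Let τ be a doubly torqued vector field. Then the Riemann curvature tensor satisfies the integrability condition R_{jklm} τ^m = g_{kl}(∇_j κ − κ α_j) − g_{jl}(∇_k κ − κ α_k) + (∇_j α_k − ∇_k α_j) τ_l + τ_k(∇_j β_l − β_j β_l) − τ_j(∇_k β_l − β_k β_l). -/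
open scoped BigOperators
open Finset

noncomputable section

variable {M : Type*} {n : ℕ}

/-- the curvature integrability condition for a doubly torqued vector. -/
theorem riemann_integrability (P : PseudoRiemannData M n)
    (τ : M → Fin n → ℝ) (κ : M → ℝ) (α β : M → Fin n → ℝ)
    (h : P.DoublyTorqued τ κ α β) :
    ∀ (x : M) (j k l : Fin n),
      (∑ m, P.Riem x j k l m * P.up τ x m)
        = P.g x k l * (P.Ds κ x j - κ x * α x j)
          - P.g x j l * (P.Ds κ x k - κ x * α x k)
          + (P.Dv α x j k - P.Dv α x k j) * τ x l
          + τ x k * (P.Dv β x j l - β x j * β x l)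
          - τ x j * (P.Dv β x k l - β x k * β x l) := by
  obtain ⟨h1, h2, h3⟩ := h
  intro x j k l
  have hτ : P.Dv τ = fun x j k =>
      (κ x * P.g x j k + α x j * τ x k) + τ x j * β x k := by
    funext y a b
    have := h1 y a b
    simpa [add_assoc] using this
  have key : ∀ (y : M) (a b c : Fin n), P.Dt (P.Dv τ) y a b c
      = P.Ds κ y a * P.g y b c
        + (P.Dv α y a b * τ y c
            + α y b * (κ y * P.g y a c + α y a * τ y c + τ y a * β y c))
        + ((κ y * P.g y a b + α y a * τ y b + τ y a * β y b) * β y c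
            + τ y b * P.Dv β y a c) := by
    intro y a b c
    rw [hτ, P.Dt_add, P.Dt_add, P.Dt_scalar_g, P.Dt_tensor, P.Dt_tensor]
    simp only [h1]
  have hric := P.ricci_identity τ x j k l
  have hL : (∑ m, P.Riem x j k l m * P.up τ x m)
      = P.Dt (P.Dv τ) x j k l - P.Dt (P.Dv τ) x k j l := by
    rw [hric]; simp [PseudoRiemannData.up]
  rw [hL, key, key, P.g_symm x k j]
  ring
end
end

section
/- Let τ be a null doubly torqued vector field such that α is a closed one-form (∇_j α_k = ∇_k α_j). Then τ is Riemann compatible: τ_i R_{jklm}τ^m + τ_j R_{kilm}τ^m + τ_k R_{ijlm}τ^m = 0. -/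
open scoped BigOperators
open Finset

noncomputable section

variable {M : Type*} {n : ℕ}

/-- a null doubly torqued vector with closed `α` is Riemann compatible. -/
theorem riemann_compatible_of_closed_alpha (P : PseudoRiemannData M n)
    (τ α β : M → Fin n → ℝ)
    (hnull : ∀ x, P.inner2 τ τ x = 0)
    (hdt : ∀ (x : M) (i j : Fin n), P.Dv τ x i j = α x i * τ x j + τ x i * β x j)
    (hα : ∀ x, P.inner2 α τ x = 0) (hβ : ∀ x, P.inner2 β τ x = 0)
    (hclosed : ∀ (x : M) (j k : Fin n), P.Dv α x j k = P.Dv α x k j) :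
    ∀ (x : M) (i j k l : Fin n),
      τ x i * (∑ m, P.Riem x j k l m * P.up τ x m)
        + τ x j * (∑ m, P.Riem x k i l m * P.up τ x m)
        + τ x k * (∑ m, P.Riem x i j l m * P.up τ x m) = 0 := by
  have hDvτ : P.Dv τ = fun x j k => α x j * τ x k + τ x j * β x k := by
    funext x j k; exact hdt x j k
  have h1 : P.Dt (P.Dv τ) = fun x i j k =>
      (P.Dv α x i j * τ x k + α x j * P.Dv τ x i k)
        + (P.Dv τ x i j * β x k + τ x j * P.Dv β x i k) := by
    rw [hDvτ, P.Dt_add, P.Dt_tensor, P.Dt_tensor]; simp only [hDvτ]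
  have key : ∀ (x : M) (j k l : Fin n), (∑ m, P.Riem x j k l m * P.up τ x m)
      = τ x k * (P.Dv β x j l - β x j * β x l)
        - τ x j * (P.Dv β x k l - β x k * β x l) := by
    intro x j k l
    have hric := P.ricci_identity τ x j k l
    rw [h1] at hric
    simp only [hdt] at hric
    have : (∑ m, P.Riem x j k l m * P.up τ x m)
        = ∑ m, P.Riem x j k l m * ∑ p, P.ginv x m p * τ x p := rfl
    rw [this, ← hric, hclosed x j k]
    ring
  intro x i j k l
  rw [key, key, key]
  ring
end
end

section
/- If a vector field τ on a pseudo-Riemannian manifold is Riemann compatible, i.e. τ_i R_{jklm}τ^m + τ_j R_{kilm}τ^m + τ_k R_{ijlm}τ^m = 0, then τ_i R_{km}τ^m = τ_k R_{im}τ^m; in particular, at points where τ ≠ 0, τ is an eigenvector of the Ricci tensor: R_{km}τ^m = ρ τ_k for some scalar ρ. -/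
open scoped BigOperators
open Finset

noncomputable section

variable {M : Type*} {n : ℕ}

private lemma sum3_rot {n : ℕ} (F : Fin n → Fin n → Fin n → ℝ) :
    ∑ j, ∑ l, ∑ m, F j l m = ∑ m, ∑ j, ∑ l, F j l m := by
  calc ∑ j, ∑ l, ∑ m, F j l m = ∑ j, ∑ m, ∑ l, F j l m :=
        Finset.sum_congr rfl fun _ _ => Finset.sum_comm
    _ = ∑ m, ∑ j, ∑ l, F j l m := Finset.sum_comm

private lemma sum3_rot2 {n : ℕ} (F : Fin n → Fin n → Fin n → ℝ) :
    ∑ j, ∑ l, ∑ m, F j l m = ∑ l, ∑ m, ∑ j, F j l m := by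
  rw [sum3_rot, sum3_rot]

/-- a Riemann compatible vector satisfies `τ_i R_{km}τ^m = τ_k R_{im}τ^m`,
hence is a Ricci eigenvector wherever it is nonzero. -/
theorem ricci_eigenvector_of_riemann_compatible (P : PseudoRiemannData M n)
    (τ : M → Fin n → ℝ)
    (hcomp : ∀ (x : M) (i j k l : Fin n),
      τ x i * (∑ m, P.Riem x j k l m * P.up τ x m)
        + τ x j * (∑ m, P.Riem x k i l m * P.up τ x m)
        + τ x k * (∑ m, P.Riem x i j l m * P.up τ x m) = 0) :
    (∀ (x : M) (i k : Fin n),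
      τ x i * (∑ m, P.Ric x k m * P.up τ x m)
        = τ x k * (∑ m, P.Ric x i m * P.up τ x m))
    ∧ ∀ x : M, (∃ i : Fin n, τ x i ≠ 0) →
        ∃ ρ : ℝ, ∀ k : Fin n, (∑ m, P.Ric x k m * P.up τ x m) = ρ * τ x k := by
  have key : ∀ (x : M) (i k : Fin n),
      τ x i * (∑ m, P.Ric x k m * P.up τ x m)
        = τ x k * (∑ m, P.Ric x i m * P.up τ x m) := by
    intro x i k
    have H : ∑ j, ∑ l, P.ginv x j l *
        (τ x i * (∑ m, P.Riem x j k l m * P.up τ x m)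
          + τ x j * (∑ m, P.Riem x k i l m * P.up τ x m)
          + τ x k * (∑ m, P.Riem x i j l m * P.up τ x m)) = 0 := by
      simp [hcomp]
    have e1 : ∑ j, ∑ l, P.ginv x j l * (τ x i * (∑ m, P.Riem x j k l m * P.up τ x m))
        = τ x i * (∑ m, P.Ric x k m * P.up τ x m) := by
      have l1 : ∑ j, ∑ l, P.ginv x j l * (τ x i * (∑ m, P.Riem x j k l m * P.up τ x m))
          = ∑ j, ∑ l, ∑ m, P.ginv x j l * τ x i * P.Riem x j k l m * P.up τ x m := by
        refine Finset.sum_congr rfl fun j _ => Finset.sum_congr rfl fun l _ => ?_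
        simp only [Finset.mul_sum]
        exact Finset.sum_congr rfl fun m _ => by ring
      have l2 : τ x i * (∑ m, P.Ric x k m * P.up τ x m)
          = ∑ m, ∑ j, ∑ l, P.ginv x j l * τ x i * P.Riem x j k l m * P.up τ x m := by
        simp only [Finset.mul_sum]
        refine Finset.sum_congr rfl fun m _ => ?_
        simp only [PseudoRiemannData.Ric, Finset.sum_mul, Finset.mul_sum]
        refine Finset.sum_congr rfl fun j _ => Finset.sum_congr rfl fun l _ => by ring
      rw [l1, l2, sum3_rot]
    have e3 : ∑ j, ∑ l, P.ginv x j l * (τ x k * (∑ m, P.Riem x i j l m * P.up τ x m))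
        = - (τ x k * (∑ m, P.Ric x i m * P.up τ x m)) := by
      have l1 : ∑ j, ∑ l, P.ginv x j l * (τ x k * (∑ m, P.Riem x i j l m * P.up τ x m))
          = ∑ j, ∑ l, ∑ m, -(P.ginv x j l * τ x k * P.Riem x j i l m * P.up τ x m) := by
        refine Finset.sum_congr rfl fun j _ => Finset.sum_congr rfl fun l _ => ?_
        simp only [Finset.mul_sum]
        refine Finset.sum_congr rfl fun m _ => ?_
        rw [P.riem_antisym1 x i j l m]
        ring
      have l2 : τ x k * (∑ m, P.Ric x i m * P.up τ x m)
          = ∑ m, ∑ j, ∑ l, P.ginv x j l * τ x k * P.Riem x j i l m * P.up τ x m := by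
        simp only [Finset.mul_sum]
        refine Finset.sum_congr rfl fun m _ => ?_
        simp only [PseudoRiemannData.Ric, Finset.sum_mul, Finset.mul_sum]
        refine Finset.sum_congr rfl fun j _ => Finset.sum_congr rfl fun l _ => by ring
      rw [l1, l2]
      rw [show (∑ j, ∑ l, ∑ m, -(P.ginv x j l * τ x k * P.Riem x j i l m * P.up τ x m))
          = -∑ j, ∑ l, ∑ m, P.ginv x j l * τ x k * P.Riem x j i l m * P.up τ x m by
        simp [Finset.sum_neg_distrib]]
      rw [sum3_rot]
    have e2 : ∑ j, ∑ l, P.ginv x j l * (τ x j * (∑ m, P.Riem x k i l m * P.up τ x m)) = 0 := by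
      have hS : ∑ j, ∑ l, P.ginv x j l * (τ x j * (∑ m, P.Riem x k i l m * P.up τ x m))
          = ∑ l, ∑ m, P.up τ x l * P.Riem x k i l m * P.up τ x m := by
        have l1 : ∑ j, ∑ l, P.ginv x j l * (τ x j * (∑ m, P.Riem x k i l m * P.up τ x m))
            = ∑ j, ∑ l, ∑ m, P.ginv x j l * τ x j * P.Riem x k i l m * P.up τ x m := by
          refine Finset.sum_congr rfl fun j _ => Finset.sum_congr rfl fun l _ => ?_
          simp only [Finset.mul_sum]
          exact Finset.sum_congr rfl fun m _ => by ring
        have l2 : ∑ l, ∑ m, P.up τ x l * P.Riem x k i l m * P.up τ x m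
            = ∑ l, ∑ m, ∑ j, P.ginv x j l * τ x j * P.Riem x k i l m * P.up τ x m := by
          refine Finset.sum_congr rfl fun l _ => Finset.sum_congr rfl fun m _ => ?_
          rw [show P.up τ x l = ∑ j, P.ginv x j l * τ x j by
            simp only [PseudoRiemannData.up]
            exact Finset.sum_congr rfl fun j _ => by rw [P.ginv_symm x l j]]
          rw [Finset.sum_mul, Finset.sum_mul]
        rw [l1, l2, sum3_rot2]
      have hA : ∑ l, ∑ m, P.up τ x l * P.Riem x k i l m * P.up τ x m
          = - ∑ l, ∑ m, P.up τ x l * P.Riem x k i l m * P.up τ x m := by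
        conv_lhs => rw [Finset.sum_comm]
        rw [← Finset.sum_neg_distrib]
        refine Finset.sum_congr rfl fun m _ => ?_
        rw [← Finset.sum_neg_distrib]
        refine Finset.sum_congr rfl fun l _ => ?_
        rw [P.riem_antisym2 x k i l m]
        ring
      rw [hS]
      linarith [hA]
    have Hsplit : ∑ j, ∑ l, P.ginv x j l *
        (τ x i * (∑ m, P.Riem x j k l m * P.up τ x m)
          + τ x j * (∑ m, P.Riem x k i l m * P.up τ x m)
          + τ x k * (∑ m, P.Riem x i j l m * P.up τ x m))
        = (∑ j, ∑ l, P.ginv x j l * (τ x i * (∑ m, P.Riem x j k l m * P.up τ x m)))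
          + (∑ j, ∑ l, P.ginv x j l * (τ x j * (∑ m, P.Riem x k i l m * P.up τ x m)))
          + (∑ j, ∑ l, P.ginv x j l * (τ x k * (∑ m, P.Riem x i j l m * P.up τ x m))) := by
      simp only [← Finset.sum_add_distrib]
      refine Finset.sum_congr rfl fun j _ => Finset.sum_congr rfl fun l _ => ?_
      ring
    rw [Hsplit, e1, e2, e3] at H
    linarith
  refine ⟨key, fun x hx => ?_⟩
  obtain ⟨i, hi⟩ := hx
  refine ⟨(∑ m, P.Ric x i m * P.up τ x m) / τ x i, fun k => ?_⟩
  have h := key x i k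
  field_simp
  linarith
end
end

section
/- Let τ be a null doubly torqued vector field which is hypersurface orthogonal in the sense τ_i = (1/λ)∇_i f with λ nowhere zero. Then the rescaled vector τ' = λτ is closed (∇_i τ'_j = ∇_j τ'_i) and satisfies ∇_i τ'_j = θ τ'_i τ'_j + β'_i τ'_j + τ'_i β'_j for some scalar θ and one-form β' with β'(τ') = 0. -/
open scoped BigOperators
open Finset

noncomputable section

variable {M : Type*} {n : ℕ}

/-- a hypersurface orthogonal null doubly torqued vector can be rescaled
to a closed null doubly torqued vector satisfying
`∇_i τ'_j = θ τ'_i τ'_j + β'_i τ'_j + τ'_i β'_j` with `β'(τ') = 0`. -/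
theorem rescaled_closed_null_doublyTorqued (P : PseudoRiemannData M n)
    (τ α β : M → Fin n → ℝ) (lam f : M → ℝ)
    (hnull : ∀ x, P.inner2 τ τ x = 0)
    (hdt : ∀ (x : M) (i j : Fin n), P.Dv τ x i j = α x i * τ x j + τ x i * β x j)
    (hα : ∀ x, P.inner2 α τ x = 0) (hβ : ∀ x, P.inner2 β τ x = 0)
    (hlam : ∀ x, lam x ≠ 0)
    (hHO : ∀ (x : M) (i : Fin n), lam x * τ x i = P.Ds f x i) :
    (∀ (x : M) (i j : Fin n),
      P.Dv (fun y k => lam y * τ y k) x i j = P.Dv (fun y k => lam y * τ y k) x j i)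
    ∧ ∃ (θ : M → ℝ) (β' : M → Fin n → ℝ),
        (∀ x, P.inner2 β' (fun y k => lam y * τ y k) x = 0)
        ∧ ∀ (x : M) (i j : Fin n),
            P.Dv (fun y k => lam y * τ y k) x i j
              = θ x * (lam x * τ x i) * (lam x * τ x j)
                + β' x i * (lam x * τ x j) + (lam x * τ x i) * β' x j := by
  classical
  -- τ' = λτ equals Ds f
  have hτ' : (fun y k => lam y * τ y k) = P.Ds f := by
    funext y k; exact hHO y k
  -- closedness
  have hclosed : ∀ (x : M) (i j : Fin n),
      P.Dv (fun y k => lam y * τ y k) x i j = P.Dv (fun y k => lam y * τ y k) x j i := by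
    intro x i j
    rw [hτ']
    exact P.hessian_symm f x i j
  -- explicit formula for Dv τ'
  have hD : ∀ (x : M) (i j : Fin n),
      P.Dv (fun y k => lam y * τ y k) x i j
        = P.Ds lam x i * τ x j + lam x * (α x i * τ x j + τ x i * β x j) := by
    intro x i j
    rw [P.Dv_smul lam τ]
    dsimp only
    rw [hdt]
  -- the one-form ν = ∇λ + λα − λβ is proportional to τ
  set ν : M → Fin n → ℝ := fun x i => P.Ds lam x i + lam x * α x i - lam x * β x i with hν
  have hsym : ∀ (x : M) (i j : Fin n), ν x i * τ x j = ν x j * τ x i := by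
    intro x i j
    have h1 := hclosed x i j
    rw [hD x i j, hD x j i] at h1
    simp only [hν]
    linear_combination h1
  refine ⟨hclosed, ?_⟩
  refine ⟨fun x => if h : ∃ k, τ x k ≠ 0
      then ν x h.choose / (τ x h.choose * (lam x) ^ 2) else 0, β, ?_, ?_⟩
  · intro x
    have key : P.inner2 β (fun y k => lam y * τ y k) x = lam x * P.inner2 β τ x := by
      simp only [PseudoRiemannData.inner2, PseudoRiemannData.up, Finset.mul_sum]
      exact Finset.sum_congr rfl fun i _ => Finset.sum_congr rfl fun j _ => by ring
    rw [key, hβ, mul_zero]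
  · intro x i j
    rw [hD x i j]
    dsimp only
    by_cases h : ∃ k, τ x k ≠ 0
    · rw [dif_pos h]
      obtain hk := h.choose_spec
      set k := h.choose
      have hprop := hsym x i k
      have hl := hlam x
      simp only [hν] at hprop
      field_simp
      linear_combination (τ x j) * hprop
    · rw [dif_neg h]
      push_neg at h
      simp [h i, h j]
end
end
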